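/- arXiv:2104.10286 — 4 statements merged into one kernel-verified Lean document; each statement's English description precedes it below -/
import Mathlib

section
/- For every alphabet Σ, every w, k ∈ ℕ⁺, every (Σ,w)-ODD D of length k, and every natural number k' ≥ k, there exists a (Σ,w)-ODD D' of length k' such that L(D') = L(D). -/
open FirstOrder

/-- A language (set of strings) is regular if it is recognized by a
deterministic finite automaton with finitely many states. -/
def LangRegular {β : Type} (L : Set (List β)) : Prop :=
  Language.IsRegular (L : Language β)

/-- A `(Σ,w)`-layer: left/right frontiers contained in `{0,…,w−1}`, a set of
transitions labelled by symbols of `Σ` or the padding symbol (`none`), sets of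
initial and final states, and two boolean flags. -/
structure Layer (σ : Type) (w : ℕ) where
  left : Set (Fin w)
  right : Set (Fin w)
  trans : Set (Fin w × Option σ × Fin w)
  initial : Set (Fin w)
  final : Set (Fin w)
  ini : Bool
  fin : Bool
  trans_mem : ∀ t ∈ trans, t.1 ∈ left ∧ t.2.2 ∈ right
  initial_sub : initial ⊆ left
  final_sub : final ⊆ right
  initial_empty : ini = false → initial = ∅
  final_empty : fin = false → final = ∅

instance {σ : Type} {w : ℕ} : Inhabited (Layer σ w) :=
  ⟨{ left := ∅, right := ∅, trans := ∅, initial := ∅, final := ∅,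
     ini := false, fin := false,
     trans_mem := by simp, initial_sub := by simp, final_sub := by simp,
     initial_empty := fun _ => rfl, final_empty := fun _ => rfl }⟩

/-- A string of layers is a `(Σ,w)`-ODD: it is non-empty, consecutive frontiers
match, the initial flag is set exactly on the first layer, and the final flag is
set exactly on the last layer. -/
def IsODD {σ : Type} {w : ℕ} (D : List (Layer σ w)) : Prop :=
  D ≠ [] ∧
  (∀ i : ℕ, (h : i + 1 < D.length) →
    (D[i + 1]'h).left = (D[i]'(by omega)).right) ∧
  (∀ i : ℕ, (h : i < D.length) →
    ((D[i]'h).ini = true ↔ i = 0) ∧ ((D[i]'h).fin = true ↔ i = D.length - 1))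

/-- Acceptance of a (non-empty) string `s` of length at most `|D|` by the ODD `D`:
there is a sequence of compatible transitions, reading the symbols of `s` followed
by padding symbols, from an initial state of the first layer to a final state of
the last layer. -/
def OddAccepts {σ : Type} {w : ℕ} (D : List (Layer σ w)) (s : List σ) : Prop :=
  s ≠ [] ∧ s.length ≤ D.length ∧
  ∃ st : ℕ → Fin w,
    (∀ i : ℕ, (h : i < D.length) → (st i, s[i]?, st (i + 1)) ∈ (D[i]'h).trans) ∧
    ∀ h : 0 < D.length,
      st 0 ∈ (D[0]'h).initial ∧ st D.length ∈ (D[D.length - 1]'(by omega)).final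

/-- The language of an ODD. -/
def OddLang {σ : Type} {w : ℕ} (D : List (Layer σ w)) : Set (List σ) :=
  { s | OddAccepts D s }

/-- Convolution (tensor product) of a family of strings over (possibly different)
alphabets: the string of length `max_i |u_i|` whose `j`-th symbol has `i`-th
component the `j`-th symbol of `u_i` if `j < |u_i|`, and the padding symbol `none`
otherwise. -/
def convD {a : ℕ} {α : Fin a → Type} (us : ∀ i, List (α i)) :
    List (∀ i, Option (α i)) :=
  List.ofFn fun j : Fin (Finset.univ.sup fun i => (us i).length) =>
    fun i => (us i)[(j : ℕ)]?

/-- A relation of tuples of strings is regular if its associated language, the set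
of convolutions of its tuples, is a regular language. -/
def RegularRelD {a : ℕ} {α : Fin a → Type} (R : Set (∀ i, List (α i))) : Prop :=
  LangRegular { x | ∃ us ∈ R, convD us = x }

/-- Convolution of a pair of strings over two alphabets. -/
def conv2 {α β : Type} (u : List α) (v : List β) : List (Option α × Option β) :=
  List.ofFn fun j : Fin (max u.length v.length) => (u[(j : ℕ)]?, v[(j : ℕ)]?)

/-- A binary relation of strings is regular if its associated language is regular. -/
def Regular2 {α β : Type} (R : Set (List α × List β)) : Prop :=
  LangRegular { x | ∃ p ∈ R, conv2 p.1 p.2 = x }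

/-- Convolution of an `(a+1)`-tuple of strings `(u, v₁, …, vₐ)` where `u` is over
the alphabet `α` and the `v`s over the alphabet `β`. -/
def conv1a {α β : Type} {a : ℕ} (u : List α) (vs : Fin a → List β) :
    List (Option α × (Fin a → Option β)) :=
  List.ofFn fun j : Fin (max u.length (Finset.univ.sup fun i => (vs i).length)) =>
    (u[(j : ℕ)]?, fun i => (vs i)[(j : ℕ)]?)

/-- An `(a+1)`-ary relation whose first coordinate is a string over `α` and whose
remaining `a` coordinates are strings over `β` is regular if its associated
language of convolutions is regular. -/
def Regular1a {α β : Type} {a : ℕ} (R : Set (List α × (Fin a → List β))) : Prop :=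
  LangRegular { x | ∃ p ∈ R, conv1a p.1 p.2 = x }

/-- The `a`-fold tensor product `L^{⊗a}` of a language `L`. -/
def tensorLang {σ : Type} {a : ℕ} (L : Set (List σ)) :
    Set (List (Fin a → Option σ)) :=
  { x | ∃ us : Fin a → List σ, (∀ i, us i ∈ L) ∧ convD us = x }

/-- The purely relational first-order vocabulary with `r` relation symbols of
arities `ar 0, …, ar (r-1)`. -/
def vocLang (r : ℕ) (ar : Fin r → ℕ) : FirstOrder.Language :=
  { Functions := fun _ => Empty, Relations := fun n => { i : Fin r // ar i = n } }

/-- A tuple `(D₀, D₁, …, Dᵣ)` is `(Σ,w,τ)`-structural: all ODDs have a common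
length, `D₀` is over `Σ`, `Dᵢ` is over `Σ^{⊗aᵢ}` (with padding components), and
`L(Dᵢ) ⊆ L(D₀)^{⊗aᵢ}`. -/
def IsStructural {σ : Type} {w r : ℕ} {ar : Fin r → ℕ}
    (D₀ : List (Layer σ w))
    (Ds : ∀ i : Fin r, List (Layer (Fin (ar i) → Option σ) w)) : Prop :=
  IsODD D₀ ∧
  ∀ i : Fin r, IsODD (Ds i) ∧ (Ds i).length = D₀.length ∧
    OddLang (Ds i) ⊆ tensorLang (OddLang D₀)

/-- The `τ`-structure derived from a structural tuple: its domain is `L(D₀)` and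
the `i`-th relation holds of `(u₁,…,u_{aᵢ})` iff `u₁⊗⋯⊗u_{aᵢ} ∈ L(Dᵢ)`. -/
def derivedStr {σ : Type} {w r : ℕ} {ar : Fin r → ℕ}
    (D₀ : List (Layer σ w))
    (Ds : ∀ i : Fin r, List (Layer (Fin (ar i) → Option σ) w)) :
    (vocLang r ar).Structure { s : List σ // s ∈ OddLang D₀ } where
  funMap := fun f _ => f.elim
  RelMap := fun {n} Rl x =>
    match Rl with
    | ⟨i, h⟩ =>
      convD (fun m : Fin (ar i) => (x (Fin.cast h m)).val) ∈ OddLang (Ds i)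

/-- The type of `(r+1)`-tuples of ODDs `(D₀, D₁, …, Dᵣ)`. -/
def StructTuple (σ : Type) (w r : ℕ) (ar : Fin r → ℕ) : Type :=
  List (Layer σ w) × ((i : Fin r) → List (Layer (Fin (ar i) → Option σ) w))

/-- Convolution of an `(r+1)`-tuple of ODDs. -/
def convTuple {σ : Type} {w r : ℕ} {ar : Fin r → ℕ} (q : StructTuple σ w r ar) :
    List (Option (Layer σ w) ×
      ((i : Fin r) → Option (Layer (Fin (ar i) → Option σ) w))) :=
  List.ofFn fun j : Fin (max q.1.length (Finset.univ.sup fun i => (q.2 i).length)) =>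
    (q.1[(j : ℕ)]?, fun i => (q.2 i)[(j : ℕ)]?)

/-- A set of `(r+1)`-tuples of ODDs is regular if its associated language of
convolutions is regular. -/
def RegularTuple {σ : Type} {w r : ℕ} {ar : Fin r → ℕ}
    (R : Set (StructTuple σ w r ar)) : Prop :=
  LangRegular { x | ∃ q ∈ R, convTuple q = x }

/-- The type of `(r+1+p)`-tuples `(D₀, D₁, …, Dᵣ, v₁, …, v_p)`. -/
def StructTupleV (σ : Type) (w r : ℕ) (ar : Fin r → ℕ) (p : ℕ) : Type :=
  StructTuple σ w r ar × (Fin p → List σ)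

/-- Convolution of an `(r+1+p)`-tuple `(D₀, D₁, …, Dᵣ, v₁, …, v_p)`. -/
def convStruct {σ : Type} {w r : ℕ} {ar : Fin r → ℕ} {p : ℕ}
    (q : StructTupleV σ w r ar p) :
    List ((Option (Layer σ w) ×
        ((i : Fin r) → Option (Layer (Fin (ar i) → Option σ) w))) ×
      (Fin p → Option σ)) :=
  List.ofFn fun j : Fin (max (max q.1.1.length
      (Finset.univ.sup fun i => (q.1.2 i).length))
      (Finset.univ.sup fun t => (q.2 t).length)) =>
    ((q.1.1[(j : ℕ)]?, fun i => (q.1.2 i)[(j : ℕ)]?), fun t => (q.2 t)[(j : ℕ)]?)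

/-- A set of `(r+1+p)`-tuples is regular if its associated language of
convolutions is regular. -/
def RegularStruct {σ : Type} {w r : ℕ} {ar : Fin r → ℕ} {p : ℕ}
    (R : Set (StructTupleV σ w r ar p)) : Prop :=
  LangRegular { x | ∃ q ∈ R, convStruct q = x }

/-! Append to the ODD a layer that reads only the padding symbol and loops on the final states of
the last layer, and move the final flag onto it. Acceptance consults only the final states of the
last layer, and strings accepted by the original ODD have length at most its length, so the new
layer merely repeats the last state of every accepting run; iterating gives every larger length. -/

namespace Layer

variable {σ : Type} {w : ℕ}

@[simps]
def clearFinal (L : Layer σ w) : Layer σ w :=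
  { L with
    final := ∅
    fin := false
    final_sub := Set.empty_subset _
    final_empty := fun _ => rfl }

@[simps]
def padAfter (L : Layer σ w) : Layer σ w where
  left := L.right
  right := L.right
  trans := {t | t.1 ∈ L.final ∧ t.2.1 = none ∧ t.2.2 = t.1}
  initial := ∅
  final := L.final
  ini := false
  fin := true
  trans_mem := fun _ ht => ⟨L.final_sub ht.1, ht.2.2 ▸ L.final_sub ht.1⟩
  initial_sub := Set.empty_subset _
  final_sub := L.final_sub
  initial_empty := fun _ => rfl
  final_empty := nofun

end Layer

section PadRight

variable {σ : Type} {w : ℕ}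

def padRight (D : List (Layer σ w)) : List (Layer σ w) :=
  D.map Layer.clearFinal ++ [(D.getLast?.getD default).padAfter]

variable {D : List (Layer σ w)}

@[simp]
theorem length_padRight : (padRight D).length = D.length + 1 := by
  simp [padRight]

theorem getElem_padRight_of_lt {i : ℕ} (h : i < D.length) :
    (padRight D)[i]'(by simp; omega) = (D[i]).clearFinal := by
  simp [padRight, List.getElem_append_left, h]

theorem getElem_padRight_of_length_le (hD : D ≠ []) {i : ℕ} (hi : D.length ≤ i)
    (h : i < (padRight D).length) :
    (padRight D)[i] =
      (D[D.length - 1]'(by have := List.length_pos_iff.mpr hD; omega)).padAfter := by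
  obtain rfl : i = D.length := by simp at h; omega
  simp [padRight, List.getLast?_eq_getElem?, List.length_pos_iff.mpr hD]

theorem IsODD.padRight (hD : IsODD D) : IsODD (padRight D) := by
  obtain ⟨hne, hfront, hflag⟩ := hD
  have hpos := List.length_pos_iff.mpr hne
  refine ⟨by simp [_root_.padRight], fun i h => ?_, fun i h => ?_⟩
  · simp only [length_padRight] at h
    rw [getElem_padRight_of_lt (by omega : i < D.length)]
    rcases lt_or_ge (i + 1) D.length with hi | hi
    · simpa [getElem_padRight_of_lt hi] using hfront i hi
    · obtain rfl : i = D.length - 1 := by omega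
      rw [getElem_padRight_of_length_le hne hi]
      rfl
  · rcases lt_or_ge i D.length with hi | hi
    · simpa [getElem_padRight_of_lt hi, hi.ne] using (hflag i hi).1
    · rw [getElem_padRight_of_length_le hne hi]
      simp only [length_padRight] at h ⊢
      simp only [Layer.padAfter_ini, Layer.padAfter_fin, Bool.false_eq_true, true_iff,
        false_iff]
      omega

theorem oddLang_padRight (hD : IsODD D) : OddLang (padRight D) = OddLang D := by
  have hne := hD.1
  have hpos := List.length_pos_iff.mpr hne
  ext s
  simp only [OddLang, Set.mem_ofPred_eq, OddAccepts, length_padRight]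
  constructor
  · rintro ⟨hs, -, st, hrun, hends⟩
    have hlast := hrun D.length (by omega)
    rw [getElem_padRight_of_length_le hne le_rfl] at hlast
    obtain ⟨hfinal, hpad, -⟩ := hlast
    refine ⟨hs, List.getElem?_eq_none_iff.mp hpad, st, fun i h => ?_, fun _ => ⟨?_, hfinal⟩⟩
    · simpa [getElem_padRight_of_lt h] using hrun i (by omega)
    · simpa [getElem_padRight_of_lt hpos] using (hends (by omega)).1
  · rintro ⟨hs, hlen, st, hrun, hends⟩
    refine ⟨hs, by omega, fun i => st (min i D.length), fun i h => ?_, fun _ => ⟨?_, ?_⟩⟩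
    · rcases lt_or_ge i D.length with hi | hi
      · dsimp only
        rw [getElem_padRight_of_lt hi, min_eq_left hi.le, min_eq_left hi]
        exact hrun i hi
      · obtain rfl : i = D.length := by simp at h; omega
        rw [getElem_padRight_of_length_le hne hi]
        exact ⟨by simpa using (hends hpos).2, List.getElem?_eq_none hlen, by simp⟩
    · simpa [getElem_padRight_of_lt hpos] using (hends hpos).1
    · rw [getElem_padRight_of_length_le hne (by omega)]
      simpa using (hends hpos).2

end PadRight

theorem stmt0_general (σ : Type) (w k : ℕ)
    (D : List (Layer σ w)) (hD : IsODD D) (hDlen : D.length = k)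
    (k' : ℕ) (hk' : k ≤ k') :
    ∃ D' : List (Layer σ w), IsODD D' ∧ D'.length = k' ∧ OddLang D' = OddLang D := by
  induction k', hk' using Nat.le_induction with
  | base => exact ⟨D, hD, hDlen, rfl⟩
  | succ m _ ih =>
    obtain ⟨E, hE, hElen, hEL⟩ := ih
    exact ⟨padRight E, hE.padRight, by simp [hElen], (oddLang_padRight hE).trans hEL⟩

/-- For every alphabet `Σ`, every `w, k ∈ ℕ⁺`, every `(Σ,w)`-ODD `D` of length `k`,
and every `k' ≥ k`, there exists a `(Σ,w)`-ODD `D'` of length `k'` with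
`L(D') = L(D)`. -/
theorem stmt0 (σ : Type) [Fintype σ] [Nonempty σ] (w k : ℕ) (hw : 0 < w) (hk : 0 < k)
    (D : List (Layer σ w)) (hD : IsODD D) (hDlen : D.length = k)
    (k' : ℕ) (hk' : k ≤ k') :
    ∃ D' : List (Layer σ w), IsODD D' ∧ D'.length = k' ∧ OddLang D' = OddLang D :=
  stmt0_general σ w k D hD hDlen k' hk'
end

section
/- Let τ = (R₁,…,Rᵣ) be a relational vocabulary with arities a₁,…,aᵣ, Σ an alphabet, and w ∈ ℕ⁺. If S is a finite τ-structure that is (Σ,w)-decisional, then S is ({0,1}, w²·|Σ|^{max{1,a₁,…,aᵣ}})-decisional; equivalently, if the Σ-decisional width of S is at most w, then the {0,1}-decisional width of S is at most w²·|Σ|^{max{1,a₁,…,aᵣ}}. -/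
open FirstOrder

/-- A finite `τ`-structure on the domain `M` is `(Σ,w)`-decisional if it is
isomorphic to the structure derived from some `(Σ,w,τ)`-structural tuple. -/
def IsDecisional (σ : Type) (w : ℕ) {r : ℕ} (ar : Fin r → ℕ)
    (M : Type) (SM : (vocLang r ar).Structure M) : Prop :=
  ∃ (D₀ : List (Layer σ w)) (Ds : ∀ i : Fin r, List (Layer (Fin (ar i) → Option σ) w)),
    IsStructural D₀ Ds ∧
    Nonempty (@FirstOrder.Language.Equiv (vocLang r ar)
      { s : List σ // s ∈ OddLang D₀ } M (derivedStr D₀ Ds) SM)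


namespace ODDEnc

lemma pos_c {c m j : ℕ} (hj : j < m * c) : 0 < c := by
  rcases Nat.eq_zero_or_pos c with h | h
  · subst h; simp at hj
  · exact h

lemma div_lt_of_fin {c m j : ℕ} (hj : j < m * c) : j / c < m :=
  Nat.div_lt_of_lt_mul (by rwa [Nat.mul_comm] at hj)

variable {γ δ κ : Type} {w W : ℕ}

section Defs

variable (c : ℕ) (enc : γ → Fin c → δ) (cls : γ → ℕ → κ) (cb : κ)
  (ι₀ : Fin w → Fin W) (ι₁ : Fin w × κ → Fin W)

/-- Block encoding of a string. -/
def blockEnc (s : List γ) : List δ :=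
  List.ofFn fun j : Fin (s.length * c) =>
    enc (s[(j : ℕ) / c]'(div_lt_of_fin j.isLt)) ⟨(j : ℕ) % c, Nat.mod_lt _ (pos_c j.isLt)⟩

lemma length_blockEnc (s : List γ) : (blockEnc c enc s).length = s.length * c := by
  simp [blockEnc]

lemma getElem_blockEnc (s : List γ) (j : ℕ) (hj : j < s.length * c) :
    (blockEnc c enc s)[j]'(by simpa [length_blockEnc] using hj) =
      enc (s[j / c]'(div_lt_of_fin hj)) ⟨j % c, Nat.mod_lt _ (pos_c hj)⟩ := by
  unfold blockEnc
  rw [List.getElem_ofFn]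

lemma getElem?_blockEnc_of_lt (s : List γ) (j : ℕ) (hj : j < s.length * c) :
    (blockEnc c enc s)[j]? =
      some (enc (s[j / c]'(div_lt_of_fin hj)) ⟨j % c, Nat.mod_lt _ (pos_c hj)⟩) := by
  rw [List.getElem?_eq_getElem (by simpa [length_blockEnc] using hj)]
  exact congrArg some (getElem_blockEnc c enc s j hj)

lemma getElem?_blockEnc_of_ge (s : List γ) (j : ℕ) (hj : s.length * c ≤ j) :
    (blockEnc c enc s)[j]? = none :=
  List.getElem?_eq_none (by simpa [length_blockEnc] using hj)

/-- source state of a within-block transition -/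
def bA (p : Fin w) (f : ℕ → κ) (t : ℕ) : Fin W :=
  if t = 0 then ι₀ p else ι₁ (p, f t)

/-- target state of a within-block transition -/
def bB (p q' : Fin w) (f : ℕ → κ) (t' : ℕ) : Fin W :=
  if t' = c then ι₀ q' else ι₁ (p, f t')

/-- the transitions of the new layer at within-block position `t`, built from
the transition set `T` of the corresponding original layer. -/
def newTrans (T : Set (Fin w × Option γ × Fin w)) (t : ℕ) :
    Set (Fin W × Option δ × Fin W) :=
  { x | (∃ p g q', (p, some g, q') ∈ T ∧ ∃ ht : t < c,
      x = (bA ι₀ ι₁ p (cls g) t, some (enc g ⟨t, ht⟩),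
           bB c ι₀ ι₁ p q' (cls g) (t + 1))) ∨
    (∃ p q', (p, none, q') ∈ T ∧
      x = (bA ι₀ ι₁ p (fun _ => cb) t, none,
           bB c ι₀ ι₁ p q' (fun _ => cb) (t + 1))) }

/-- the layer of the encoded ODD at global position `j`. -/
def newLayer (D : List (Layer γ w)) (j : ℕ) : Layer δ W where
  left := Set.univ
  right := Set.univ
  trans := newTrans c enc cls cb ι₀ ι₁ ((D[j / c]?).elim ∅ Layer.trans) (j % c)
  initial := if j = 0 then (D[0]?).elim ∅ (fun L => ι₀ '' L.initial) else ∅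
  final := if j = D.length * c - 1 then
    (D[D.length - 1]?).elim ∅ (fun L => ι₀ '' L.final) else ∅
  ini := decide (j = 0)
  fin := decide (j = D.length * c - 1)
  trans_mem := fun _ _ => ⟨Set.mem_univ _, Set.mem_univ _⟩
  initial_sub := fun x _ => Set.mem_univ x
  final_sub := fun x _ => Set.mem_univ x
  initial_empty := by intro h; rw [if_neg]; simpa using h
  final_empty := by intro h; rw [if_neg]; simpa using h

/-- the encoded ODD. -/
def newODD (D : List (Layer γ w)) : List (Layer δ W) :=
  List.ofFn fun j : Fin (D.length * c) => newLayer c enc cls cb ι₀ ι₁ D (j : ℕ)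

lemma length_newODD (D : List (Layer γ w)) :
    (newODD c enc cls cb ι₀ ι₁ D).length = D.length * c := by
  simp [newODD]

lemma getElem_newODD (D : List (Layer γ w)) (j : ℕ) (hj : j < D.length * c) :
    (newODD c enc cls cb ι₀ ι₁ D)[j]'(by simpa [length_newODD] using hj) =
      newLayer c enc cls cb ι₀ ι₁ D j := by
  simp [newODD]

lemma qct_div {c : ℕ} (hc : 0 < c) {q t : ℕ} (ht : t < c) : (q * c + t) / c = q := by
  rw [Nat.mul_comm, Nat.mul_add_div hc, Nat.div_eq_of_lt ht, Nat.add_zero]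

lemma qct_mod {c : ℕ} {q t : ℕ} (ht : t < c) : (q * c + t) % c = t := by
  rw [Nat.mul_comm, Nat.mul_add_mod, Nat.mod_eq_of_lt ht]

theorem isODD_newODD (hc : 0 < c) (D : List (Layer γ w)) (hD : IsODD D) :
    IsODD (newODD c enc cls cb ι₀ ι₁ D) := by
  have hlen : (newODD c enc cls cb ι₀ ι₁ D).length = D.length * c :=
    length_newODD c enc cls cb ι₀ ι₁ D
  have hD0 : 0 < D.length := List.length_pos_iff.2 hD.1
  refine ⟨?_, ?_, ?_⟩
  · apply List.ne_nil_of_length_pos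
    rw [hlen]
    exact Nat.mul_pos hD0 hc
  · intro i h
    rw [hlen] at h
    rw [getElem_newODD c enc cls cb ι₀ ι₁ D (i+1) h,
      getElem_newODD c enc cls cb ι₀ ι₁ D i (by omega)]
    simp [newLayer]
  · intro i h
    rw [hlen] at h
    rw [getElem_newODD c enc cls cb ι₀ ι₁ D i h, hlen]
    constructor <;> simp [newLayer]

/-- lifting a run of the original ODD to a run of the encoded ODD -/
def liftRun (st : ℕ → Fin w) (s : List γ) : ℕ → Fin W :=
  fun j => if j % c = 0 then ι₀ (st (j / c))
    else ι₁ (st (j / c), ((s[(j / c)]?).elim (fun _ => cb) cls) (j % c))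

lemma liftRun_boundary (hc : 0 < c) (st : ℕ → Fin w) (s : List γ) (q : ℕ) :
    liftRun c cls cb ι₀ ι₁ st s (q * c) = ι₀ (st q) := by
  have h1 : (q * c) % c = 0 := by
    have := qct_mod (c := c) (q := q) (t := 0) hc
    simpa using this
  have h2 : (q * c) / c = q := by
    have := qct_div hc (q := q) (t := 0) hc
    simpa using this
  simp [liftRun, h1, h2]

lemma liftRun_mid (hc : 0 < c) (st : ℕ → Fin w) (s : List γ) (q t : ℕ)
    (h0 : 0 < t) (htc : t < c) :
    liftRun c cls cb ι₀ ι₁ st s (q * c + t) =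
      ι₁ (st q, ((s[q]?).elim (fun _ => cb) cls) t) := by
  have h1 : (q * c + t) % c = t := qct_mod htc
  have h2 : (q * c + t) / c = q := qct_div hc htc
  have h3 : t ≠ 0 := by omega
  simp only [liftRun, h1, h2, if_neg h3]

theorem accepts_newODD_of (hc : 0 < c) (D : List (Layer γ w)) {s : List γ}
    (hs : OddAccepts D s) :
    OddAccepts (newODD c enc cls cb ι₀ ι₁ D) (blockEnc c enc s) := by
  obtain ⟨hne, hlen, st, htr, hif⟩ := hs
  have hs0 : 0 < s.length := List.length_pos_iff.2 hne
  have hD0 : 0 < D.length := by omega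
  refine ⟨?_, ?_, liftRun c cls cb ι₀ ι₁ st s, ?_, ?_⟩
  · apply List.ne_nil_of_length_pos
    rw [length_blockEnc]
    exact Nat.mul_pos hs0 hc
  · rw [length_blockEnc, length_newODD]
    exact Nat.mul_le_mul_right c hlen
  · intro j hj
    rw [length_newODD] at hj
    rw [getElem_newODD c enc cls cb ι₀ ι₁ D j hj]
    have htc : j % c < c := Nat.mod_lt _ hc
    have hqD : j / c < D.length := div_lt_of_fin hj
    have hjeq : (j / c) * c + (j % c) = j := by
      rw [Nat.mul_comm]; exact Nat.div_add_mod j c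
    set q := j / c with hqdef
    set t := j % c with htdef
    show _ ∈ newTrans c enc cls cb ι₀ ι₁ _ _
    rw [List.getElem?_eq_getElem hqD]
    simp only [newTrans, Set.mem_setOf_eq, Option.elim]
    have horig := htr q hqD
    rcases hsq : s[q]? with _ | g
    · -- padding block
      right
      refine ⟨st q, st (q + 1), by rwa [hsq] at horig, ?_⟩
      have hql : s.length ≤ q := by
        by_contra hcon
        rw [List.getElem?_eq_getElem (by omega)] at hsq
        simp at hsq
      have eS : (blockEnc c enc s)[j]? = none := by
        apply getElem?_blockEnc_of_ge
        calc s.length * c ≤ q * c := Nat.mul_le_mul_right c hql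
        _ ≤ j := by omega
      have eA : liftRun c cls cb ι₀ ι₁ st s j = bA ι₀ ι₁ (st q) (fun _ => cb) t := by
        rcases Nat.eq_zero_or_pos t with ht0 | ht0
        · have hjq : j = q * c := by omega
          rw [hjq, liftRun_boundary c cls cb ι₀ ι₁ hc, ht0, bA, if_pos rfl]
        · rw [← hjeq, liftRun_mid c cls cb ι₀ ι₁ hc st s q t ht0 htc, hsq, bA,
            if_neg (by omega)]
          rfl
      have eB : liftRun c cls cb ι₀ ι₁ st s (j + 1) =
          bB c ι₀ ι₁ (st q) (st (q + 1)) (fun _ => cb) (t + 1) := by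
        have hj1 : j + 1 = q * c + (t + 1) := by omega
        rcases Nat.eq_or_lt_of_le (Nat.succ_le_of_lt htc) with hteq | htlt
        · have hteq' : t + 1 = c := hteq
          have hjq : j + 1 = (q + 1) * c := by rw [hj1, ← hteq']; ring
          rw [hjq, liftRun_boundary c cls cb ι₀ ι₁ hc, bB, if_pos hteq']
        · rw [hj1, liftRun_mid c cls cb ι₀ ι₁ hc st s q (t+1) (by omega) htlt, hsq, bB,
            if_neg (by omega)]
          rfl
      rw [eA, eS, eB]
    · -- symbol block
      left
      have hql : q < s.length := by
        by_contra hcon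
        rw [List.getElem?_eq_none (by omega)] at hsq
        simp at hsq
      refine ⟨st q, g, st (q + 1), by rwa [hsq] at horig, htc, ?_⟩
      have hjlt : j < s.length * c := by
        calc j < q * c + c := by omega
        _ = (q + 1) * c := by ring
        _ ≤ s.length * c := Nat.mul_le_mul_right c hql
      have hsg : s[q]'(by omega) = g := by
        rw [List.getElem?_eq_getElem (by omega)] at hsq
        exact Option.some.inj hsq
      have eS : (blockEnc c enc s)[j]? = some (enc g ⟨t, htc⟩) := by
        rw [getElem?_blockEnc_of_lt c enc s j hjlt]
        exact congrArg (fun x => some (enc x ⟨t, htc⟩)) hsg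
      have eA : liftRun c cls cb ι₀ ι₁ st s j = bA ι₀ ι₁ (st q) (cls g) t := by
        rcases Nat.eq_zero_or_pos t with ht0 | ht0
        · have hjq : j = q * c := by omega
          rw [hjq, liftRun_boundary c cls cb ι₀ ι₁ hc, ht0, bA, if_pos rfl]
        · rw [← hjeq, liftRun_mid c cls cb ι₀ ι₁ hc st s q t ht0 htc, hsq, bA,
            if_neg (by omega)]
          rfl
      have eB : liftRun c cls cb ι₀ ι₁ st s (j + 1) =
          bB c ι₀ ι₁ (st q) (st (q + 1)) (cls g) (t + 1) := by
        have hj1 : j + 1 = q * c + (t + 1) := by omega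
        rcases Nat.eq_or_lt_of_le (Nat.succ_le_of_lt htc) with hteq | htlt
        · have hteq' : t + 1 = c := hteq
          have hjq : j + 1 = (q + 1) * c := by rw [hj1, ← hteq']; ring
          rw [hjq, liftRun_boundary c cls cb ι₀ ι₁ hc, bB, if_pos hteq']
        · rw [hj1, liftRun_mid c cls cb ι₀ ι₁ hc st s q (t+1) (by omega) htlt, hsq, bB,
            if_neg (by omega)]
          rfl
      rw [eA, eS, eB]
  · intro h
    have hlc : 0 < D.length * c := Nat.mul_pos hD0 hc
    obtain ⟨hini, hfin⟩ := hif hD0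
    constructor
    · rw [getElem_newODD c enc cls cb ι₀ ι₁ D 0 hlc]
      have e0 : liftRun c cls cb ι₀ ι₁ st s 0 = ι₀ (st 0) := by
        simpa using liftRun_boundary c cls cb ι₀ ι₁ hc st s 0
      rw [e0]
      simp only [newLayer, if_pos rfl]
      rw [List.getElem?_eq_getElem hD0]
      exact ⟨st 0, hini, rfl⟩
    · have e1 : liftRun c cls cb ι₀ ι₁ st s (newODD c enc cls cb ι₀ ι₁ D).length =
          ι₀ (st D.length) := by
        rw [length_newODD]
        exact liftRun_boundary c cls cb ι₀ ι₁ hc st s D.length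
      rw [e1]
      simp only [length_newODD]
      rw [getElem_newODD c enc cls cb ι₀ ι₁ D (D.length * c - 1) (by omega)]
      simp only [newLayer, if_pos rfl]
      rw [List.getElem?_eq_getElem (by omega : D.length - 1 < D.length)]
      exact ⟨st D.length, hfin, rfl⟩

lemma bA_zero (p : Fin w) (f : ℕ → κ) : bA ι₀ ι₁ p f 0 = ι₀ p := if_pos rfl

lemma bA_pos (p : Fin w) (f : ℕ → κ) {t : ℕ} (h : t ≠ 0) :
    bA ι₀ ι₁ p f t = ι₁ (p, f t) := if_neg h

lemma bB_last (p q' : Fin w) (f : ℕ → κ) {t : ℕ} (h : t = c) :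
    bB c ι₀ ι₁ p q' f t = ι₀ q' := if_pos h

lemma bB_mid (p q' : Fin w) (f : ℕ → κ) {t : ℕ} (h : t ≠ c) :
    bB c ι₀ ι₁ p q' f t = ι₁ (p, f t) := if_neg h

theorem block_sound
    (hc : 0 < c) (hι₀ : Function.Injective ι₀)
    (hι₁ : 2 ≤ c → Function.Injective ι₁)
    (H1 : ∀ g g' t, 0 < t → t < c → cls g t = cls g' t →
      ∀ j (hj : j < c), j < t → enc g ⟨j, hj⟩ = enc g' ⟨j, hj⟩)
    (T : Set (Fin w × Option γ × Fin w))
    (H2 : ∀ p g q', (p, some g, q') ∈ T → ∀ t, 0 < t → t < c → cls g t ≠ cb)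
    (s' : List δ) (st' : ℕ → Fin W) (q : ℕ) (p : Fin w)
    (hstq : st' (q * c) = ι₀ p)
    (htr : ∀ t, t < c → (st' (q * c + t), s'[q * c + t]?, st' (q * c + t + 1)) ∈
      newTrans c enc cls cb ι₀ ι₁ T t) :
    (∃ g q', (p, some g, q') ∈ T ∧ st' (q * c + c) = ι₀ q' ∧
        ∀ t (ht : t < c), s'[q * c + t]? = some (enc g ⟨t, ht⟩)) ∨
    (∃ q', (p, none, q') ∈ T ∧ st' (q * c + c) = ι₀ q' ∧
        ∀ t, t < c → s'[q * c + t]? = none) := by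
  by_cases hc1 : c = 1
  · subst hc1
    have h0 := htr 0 Nat.one_pos
    simp only [newTrans, Set.mem_setOf_eq] at h0
    rcases h0 with ⟨p', g, q', hT, ht, heq⟩ | ⟨p', q', hT, heq⟩
    · obtain ⟨e1, e2, e3⟩ : st' (q * 1 + 0) = bA ι₀ ι₁ p' (cls g) 0 ∧
          s'[q * 1 + 0]? = some (enc g ⟨0, ht⟩) ∧
          st' (q * 1 + 0 + 1) = bB 1 ι₀ ι₁ p' q' (cls g) (0 + 1) := by
        simpa [Prod.ext_iff] using heq
      rw [bA_zero] at e1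
      rw [bB_last _ ι₀ ι₁ p' q' (cls g) rfl] at e3
      rw [Nat.add_zero] at e1 e2
      have hp : p' = p := hι₀ (by rw [← e1, ← hstq])
      subst hp
      left
      refine ⟨g, q', hT, by rw [show q * 1 + 1 = q * 1 + 0 + 1 by omega]; exact e3, ?_⟩
      intro t htl
      have ht0 : t = 0 := by omega
      subst ht0
      rw [Nat.add_zero]
      exact e2
    · obtain ⟨e1, e2, e3⟩ : st' (q * 1 + 0) = bA ι₀ ι₁ p' (fun _ => cb) 0 ∧
          s'[q * 1 + 0]? = none ∧
          st' (q * 1 + 0 + 1) = bB 1 ι₀ ι₁ p' q' (fun _ => cb) (0 + 1) := by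
        simpa [Prod.ext_iff] using heq
      rw [bA_zero] at e1
      rw [bB_last _ ι₀ ι₁ p' q' _ rfl] at e3
      rw [Nat.add_zero] at e1 e2
      have hp : p' = p := hι₀ (by rw [← e1, ← hstq])
      subst hp
      right
      refine ⟨q', hT, by rw [show q * 1 + 1 = q * 1 + 0 + 1 by omega]; exact e3, ?_⟩
      intro t htl
      have ht0 : t = 0 := by omega
      subst ht0
      rw [Nat.add_zero]
      exact e2
  · have hc2 : 2 ≤ c := by omega
    have hinj := hι₁ hc2
    have inv : ∀ t, 0 < t → t < c →
        (∃ g, (∃ q'', (p, some g, q'') ∈ T) ∧ st' (q * c + t) = ι₁ (p, cls g t) ∧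
          ∀ j (hj : j < c), j < t → s'[q * c + j]? = some (enc g ⟨j, hj⟩)) ∨
        ((∃ q'', (p, none, q'') ∈ T) ∧ st' (q * c + t) = ι₁ (p, cb) ∧
          ∀ j, j < t → s'[q * c + j]? = none) := by
      intro t
      induction t with
      | zero => omega
      | succ t ih =>
        intro _ htc
        rcases Nat.eq_zero_or_pos t with rfl | ht0
        · -- base case: first transition of the block
          have h0 := htr 0 (by omega)
          simp only [newTrans, Set.mem_setOf_eq] at h0
          rcases h0 with ⟨p', g, q', hT, ht, heq⟩ | ⟨p', q', hT, heq⟩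
          · obtain ⟨e1, e2, e3⟩ : st' (q * c + 0) = bA ι₀ ι₁ p' (cls g) 0 ∧
                s'[q * c + 0]? = some (enc g ⟨0, ht⟩) ∧
                st' (q * c + 0 + 1) = bB c ι₀ ι₁ p' q' (cls g) (0 + 1) := by
              simpa [Prod.ext_iff] using heq
            rw [bA_zero, Nat.add_zero] at e1
            rw [bB_mid _ ι₀ ι₁ p' q' _ (by omega)] at e3
            have hp : p' = p := hι₀ (by rw [← e1, ← hstq])
            subst hp
            left
            refine ⟨g, ⟨q', hT⟩, by rw [show q * c + 1 = q * c + 0 + 1 by omega]; exact e3, ?_⟩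
            intro j hj hj1
            have hj0 : j = 0 := by omega
            subst hj0
            exact e2
          · obtain ⟨e1, e2, e3⟩ : st' (q * c + 0) = bA ι₀ ι₁ p' (fun _ => cb) 0 ∧
                s'[q * c + 0]? = none ∧
                st' (q * c + 0 + 1) = bB c ι₀ ι₁ p' q' (fun _ => cb) (0 + 1) := by
              simpa [Prod.ext_iff] using heq
            rw [bA_zero, Nat.add_zero] at e1
            rw [bB_mid _ ι₀ ι₁ p' q' _ (by omega)] at e3
            have hp : p' = p := hι₀ (by rw [← e1, ← hstq])
            subst hp
            right
            refine ⟨⟨q', hT⟩, by rw [show q * c + 1 = q * c + 0 + 1 by omega]; exact e3, ?_⟩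
            intro j hj
            have hj0 : j = 0 := by omega
            subst hj0
            exact e2
        · -- inductive step
          have hinv := ih ht0 (by omega)
          have h0 := htr t (by omega)
          simp only [newTrans, Set.mem_setOf_eq] at h0
          rcases hinv with ⟨g, ⟨q'', hT⟩, hst, hpre⟩ | ⟨⟨q'', hT⟩, hst, hpre⟩
          · rcases h0 with ⟨p', g', q₂, hT', ht', heq⟩ | ⟨p', q₂, hT', heq⟩
            · obtain ⟨e1, e2, e3⟩ : st' (q * c + t) = bA ι₀ ι₁ p' (cls g') t ∧
                  s'[q * c + t]? = some (enc g' ⟨t, ht'⟩) ∧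
                  st' (q * c + t + 1) = bB c ι₀ ι₁ p' q₂ (cls g') (t + 1) := by
                simpa [Prod.ext_iff] using heq
              rw [bA_pos ι₀ ι₁ p' _ (by omega)] at e1
              rw [bB_mid _ ι₀ ι₁ p' q₂ _ (by omega)] at e3
              have hpair : (p, cls g t) = (p', cls g' t) := hinj (by rw [← hst, e1])
              have hp : p' = p := (congrArg Prod.fst hpair).symm
              have hclseq : cls g t = cls g' t := congrArg Prod.snd hpair
              subst hp
              left
              refine ⟨g', ⟨q₂, hT'⟩, e3, ?_⟩
              intro j hj hj1
              rcases Nat.lt_or_ge j t with hjt | hjt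
              · rw [hpre j hj hjt]
                exact congrArg some (H1 g g' t ht0 (by omega) hclseq j hj hjt)
              · have hjt' : j = t := by omega
                subst hjt'
                exact e2
            · obtain ⟨e1, e2, e3⟩ : st' (q * c + t) = bA ι₀ ι₁ p' (fun _ => cb) t ∧
                  s'[q * c + t]? = none ∧
                  st' (q * c + t + 1) = bB c ι₀ ι₁ p' q₂ (fun _ => cb) (t + 1) := by
                simpa [Prod.ext_iff] using heq
              rw [bA_pos ι₀ ι₁ p' _ (by omega)] at e1
              have hpair : (p, cls g t) = (p', cb) := hinj (by rw [← hst, e1])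
              have : cls g t = cb := congrArg Prod.snd hpair
              exact absurd this (H2 p g q'' hT t ht0 (by omega))
          · rcases h0 with ⟨p', g', q₂, hT', ht', heq⟩ | ⟨p', q₂, hT', heq⟩
            · obtain ⟨e1, e2, e3⟩ : st' (q * c + t) = bA ι₀ ι₁ p' (cls g') t ∧
                  s'[q * c + t]? = some (enc g' ⟨t, ht'⟩) ∧
                  st' (q * c + t + 1) = bB c ι₀ ι₁ p' q₂ (cls g') (t + 1) := by
                simpa [Prod.ext_iff] using heq
              rw [bA_pos ι₀ ι₁ p' _ (by omega)] at e1
              have hpair : (p, cb) = (p', cls g' t) := hinj (by rw [← hst, e1])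
              have : cls g' t = cb := (congrArg Prod.snd hpair).symm
              have hp : p' = p := (congrArg Prod.fst hpair).symm
              rw [hp] at hT'
              exact absurd this (H2 p g' q₂ hT' t ht0 (by omega))
            · obtain ⟨e1, e2, e3⟩ : st' (q * c + t) = bA ι₀ ι₁ p' (fun _ => cb) t ∧
                  s'[q * c + t]? = none ∧
                  st' (q * c + t + 1) = bB c ι₀ ι₁ p' q₂ (fun _ => cb) (t + 1) := by
                simpa [Prod.ext_iff] using heq
              rw [bA_pos ι₀ ι₁ p' _ (by omega)] at e1
              rw [bB_mid _ ι₀ ι₁ p' q₂ _ (by omega)] at e3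
              have hpair : (p, cb) = (p', cb) := hinj (by rw [← hst, e1])
              have hp : p' = p := (congrArg Prod.fst hpair).symm
              subst hp
              right
              refine ⟨⟨q'', hT⟩, e3, ?_⟩
              intro j hj
              rcases Nat.lt_or_ge j t with hjt | hjt
              · exact hpre j hjt
              · have hjt' : j = t := by omega
                subst hjt'
                exact e2
    -- conclude with the last transition of the block
    have hinv := inv (c - 1) (by omega) (by omega)
    have h0 := htr (c - 1) (by omega)
    simp only [newTrans, Set.mem_setOf_eq] at h0
    have hc1' : c - 1 + 1 = c := by omega
    rcases hinv with ⟨g, ⟨q'', hT⟩, hst, hpre⟩ | ⟨⟨q'', hT⟩, hst, hpre⟩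
    · rcases h0 with ⟨p', g', q₂, hT', ht', heq⟩ | ⟨p', q₂, hT', heq⟩
      · obtain ⟨e1, e2, e3⟩ : st' (q * c + (c - 1)) = bA ι₀ ι₁ p' (cls g') (c - 1) ∧
            s'[q * c + (c - 1)]? = some (enc g' ⟨c - 1, ht'⟩) ∧
            st' (q * c + (c - 1) + 1) = bB c ι₀ ι₁ p' q₂ (cls g') (c - 1 + 1) := by
          simpa [Prod.ext_iff] using heq
        rw [bA_pos ι₀ ι₁ p' _ (by omega)] at e1
        rw [bB_last _ ι₀ ι₁ p' q₂ _ hc1'] at e3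
        have hpair : (p, cls g (c - 1)) = (p', cls g' (c - 1)) := hinj (by rw [← hst, e1])
        have hp : p' = p := (congrArg Prod.fst hpair).symm
        have hclseq : cls g (c - 1) = cls g' (c - 1) := congrArg Prod.snd hpair
        subst hp
        left
        refine ⟨g', q₂, hT', ?_, ?_⟩
        · rw [show q * c + c = q * c + (c - 1) + 1 by omega]
          exact e3
        · intro t ht
          rcases Nat.lt_or_ge t (c - 1) with htl | htl
          · rw [hpre t ht htl]
            exact congrArg some (H1 g g' (c - 1) (by omega) (by omega) hclseq t ht htl)
          · have ht' : t = c - 1 := by omega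
            subst ht'
            exact e2
      · obtain ⟨e1, e2, e3⟩ : st' (q * c + (c - 1)) = bA ι₀ ι₁ p' (fun _ => cb) (c - 1) ∧
            s'[q * c + (c - 1)]? = none ∧
            st' (q * c + (c - 1) + 1) = bB c ι₀ ι₁ p' q₂ (fun _ => cb) (c - 1 + 1) := by
          simpa [Prod.ext_iff] using heq
        rw [bA_pos ι₀ ι₁ p' _ (by omega)] at e1
        have hpair : (p, cls g (c - 1)) = (p', cb) := hinj (by rw [← hst, e1])
        have : cls g (c - 1) = cb := congrArg Prod.snd hpair
        exact absurd this (H2 p g q'' hT (c - 1) (by omega) (by omega))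
    · rcases h0 with ⟨p', g', q₂, hT', ht', heq⟩ | ⟨p', q₂, hT', heq⟩
      · obtain ⟨e1, e2, e3⟩ : st' (q * c + (c - 1)) = bA ι₀ ι₁ p' (cls g') (c - 1) ∧
            s'[q * c + (c - 1)]? = some (enc g' ⟨c - 1, ht'⟩) ∧
            st' (q * c + (c - 1) + 1) = bB c ι₀ ι₁ p' q₂ (cls g') (c - 1 + 1) := by
          simpa [Prod.ext_iff] using heq
        rw [bA_pos ι₀ ι₁ p' _ (by omega)] at e1
        have hpair : (p, cb) = (p', cls g' (c - 1)) := hinj (by rw [← hst, e1])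
        have : cls g' (c - 1) = cb := (congrArg Prod.snd hpair).symm
        have hp : p' = p := (congrArg Prod.fst hpair).symm
        rw [hp] at hT'
        exact absurd this (H2 p g' q₂ hT' (c - 1) (by omega) (by omega))
      · obtain ⟨e1, e2, e3⟩ : st' (q * c + (c - 1)) = bA ι₀ ι₁ p' (fun _ => cb) (c - 1) ∧
            s'[q * c + (c - 1)]? = none ∧
            st' (q * c + (c - 1) + 1) = bB c ι₀ ι₁ p' q₂ (fun _ => cb) (c - 1 + 1) := by
          simpa [Prod.ext_iff] using heq
        rw [bA_pos ι₀ ι₁ p' _ (by omega)] at e1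
        rw [bB_last _ ι₀ ι₁ p' q₂ _ hc1'] at e3
        have hpair : (p, cb) = (p', cb) := hinj (by rw [← hst, e1])
        have hp : p' = p := (congrArg Prod.fst hpair).symm
        subst hp
        right
        refine ⟨q₂, hT', ?_, ?_⟩
        · rw [show q * c + c = q * c + (c - 1) + 1 by omega]
          exact e3
        · intro t ht
          rcases Nat.lt_or_ge t (c - 1) with htl | htl
          · exact hpre t htl
          · have ht'' : t = c - 1 := by omega
            subst ht''
            exact e2

theorem accepts_newODD_iff
    (hc : 0 < c) (hw : 0 < w) (hι₀ : Function.Injective ι₀)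
    (hι₁ : 2 ≤ c → Function.Injective ι₁)
    (H1 : ∀ g g' t, 0 < t → t < c → cls g t = cls g' t →
      ∀ j (hj : j < c), j < t → enc g ⟨j, hj⟩ = enc g' ⟨j, hj⟩)
    (D : List (Layer γ w))
    (H2 : ∀ j (hj : j < D.length) p g q', (p, some g, q') ∈ (D[j]'hj).trans →
      ∀ t, 0 < t → t < c → cls g t ≠ cb)
    (hD : IsODD D) (s' : List δ) :
    OddAccepts (newODD c enc cls cb ι₀ ι₁ D) s' ↔
      ∃ s, OddAccepts D s ∧ s' = blockEnc c enc s := by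
  constructor
  · intro hacc
    obtain ⟨hne, hlen, st', htr', hif'⟩ := hacc
    have hD0 : 0 < D.length := List.length_pos_iff.2 hD.1
    have hlc : 0 < D.length * c := Nat.mul_pos hD0 hc
    rw [length_newODD] at hlen
    have htrB : ∀ q (hq : q < D.length), ∀ t, t < c →
        (st' (q*c+t), s'[q*c+t]?, st' (q*c+t+1)) ∈
          newTrans c enc cls cb ι₀ ι₁ (D[q]'hq).trans t := by
      intro q hq t ht
      have h1 : (q+1)*c ≤ D.length * c := Nat.mul_le_mul_right c (Nat.succ_le_of_lt hq)
      have harr : (q+1)*c = q*c+c := by ring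
      have hj : q*c+t < D.length*c := by omega
      have hmem := htr' (q*c+t) (by rw [length_newODD]; exact hj)
      rw [getElem_newODD c enc cls cb ι₀ ι₁ D _ hj] at hmem
      have hmem2 : (st' (q*c+t), s'[q*c+t]?, st' (q*c+t+1)) ∈
          newTrans c enc cls cb ι₀ ι₁ (((D[(q*c+t)/c]?).elim ∅ Layer.trans))
            ((q*c+t) % c) := hmem
      rw [qct_div hc ht, qct_mod ht, List.getElem?_eq_getElem hq] at hmem2
      exact hmem2
    obtain ⟨hini, hfin⟩ := hif' (by rw [length_newODD]; exact hlc)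
    rw [getElem_newODD c enc cls cb ι₀ ι₁ D 0 hlc] at hini
    have hini2 : st' 0 ∈ (if (0:ℕ) = 0 then
        (D[0]?).elim ∅ (fun L => ι₀ '' L.initial) else ∅) := hini
    rw [if_pos rfl, List.getElem?_eq_getElem hD0] at hini2
    obtain ⟨p0, hp0mem, hp0⟩ := hini2
    have hbnd : ∀ q, q ≤ D.length → ∃ p, st' (q*c) = ι₀ p := by
      intro q
      induction q with
      | zero => exact fun _ => ⟨p0, by rw [Nat.zero_mul, ← hp0]⟩
      | succ q ih =>
        intro hq1
        obtain ⟨p, hp⟩ := ih (by omega)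
        have hb := block_sound c enc cls cb ι₀ ι₁ hc hι₀ hι₁ H1 (D[q]'(by omega)).trans
          (fun p g q' hT t h1 h2 => H2 q (by omega) p g q' hT t h1 h2) s' st' q p hp
          (htrB q (by omega))
        have harr : (q+1)*c = q*c+c := by ring
        rcases hb with ⟨g, q', _, hq', _⟩ | ⟨q', _, hq', _⟩ <;>
          exact ⟨q', by rw [harr]; exact hq'⟩
    obtain ⟨stD, hstD⟩ : ∃ stD : ℕ → Fin w, ∀ q, q ≤ D.length →
        st' (q*c) = ι₀ (stD q) := by
      classical
      refine ⟨fun q => if h : ∃ p, st' (q*c) = ι₀ p then h.choose else ⟨0, hw⟩, ?_⟩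
      intro q hq
      show st' (q*c) = ι₀ (if h : ∃ p, st' (q*c) = ι₀ p then h.choose else ⟨0, hw⟩)
      rw [dif_pos (hbnd q hq)]
      exact (hbnd q hq).choose_spec
    have hblock : ∀ q (hq : q < D.length),
        (∃ g, (stD q, some g, stD (q+1)) ∈ (D[q]'hq).trans ∧
          ∀ t (ht : t < c), s'[q*c+t]? = some (enc g ⟨t, ht⟩)) ∨
        ((stD q, none, stD (q+1)) ∈ (D[q]'hq).trans ∧
          ∀ t, t < c → s'[q*c+t]? = none) := by
      intro q hq
      have hb := block_sound c enc cls cb ι₀ ι₁ hc hι₀ hι₁ H1 (D[q]'hq).trans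
        (fun p g q' hT t h1 h2 => H2 q hq p g q' hT t h1 h2) s' st' q (stD q)
        (hstD q (le_of_lt hq)) (htrB q hq)
      have harr : (q+1)*c = q*c+c := by ring
      have hq1 : st' ((q+1)*c) = ι₀ (stD (q+1)) := hstD (q+1) (by omega)
      rw [harr] at hq1
      rcases hb with ⟨g, q', hT, hq', hall⟩ | ⟨q', hT, hq', hall⟩
      · left
        have he : q' = stD (q+1) := hι₀ (by rw [← hq', ← hq1])
        rw [he] at hT
        exact ⟨g, hT, hall⟩
      · right
        have he : q' = stD (q+1) := hι₀ (by rw [← hq', ← hq1])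
        rw [he] at hT
        exact ⟨hT, hall⟩
    have hdich : ∀ q, q < D.length → (q+1)*c ≤ s'.length ∨ s'.length ≤ q*c := by
      intro q hq
      have harr : (q+1)*c = q*c+c := by ring
      rcases hblock q hq with ⟨g, _, hall⟩ | ⟨_, hall⟩
      · left
        have h2 := hall (c-1) (by omega)
        have hlt : q*c+(c-1) < s'.length := by
          by_contra hcon
          rw [List.getElem?_eq_none (by omega)] at h2
          simp at h2
        omega
      · right
        have h2 := hall 0 hc
        rw [Nat.add_zero] at h2
        by_contra hcon
        push_neg at hcon
        rw [List.getElem?_eq_getElem hcon] at h2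
        simp at h2
    have hmod : s'.length % c = 0 := by
      by_contra hcon
      have h2 := Nat.div_add_mod s'.length c
      have e : s'.length / c * c = c * (s'.length / c) := Nat.mul_comm _ _
      have hmodlt : s'.length % c < c := Nat.mod_lt _ hc
      have hq : s'.length / c < D.length := by
        have hx : s'.length / c * c < D.length * c := by omega
        exact lt_of_mul_lt_mul_right hx (Nat.zero_le c)
      have harr : (s'.length/c+1)*c = (s'.length/c)*c + c := by ring
      rcases hdich (s'.length / c) hq with h | h <;> omega
    have hdvd : c ∣ s'.length := Nat.dvd_of_mod_eq_zero hmod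
    have hm : s'.length / c * c = s'.length := Nat.div_mul_cancel hdvd
    set m := s'.length / c with hmdef
    have hmD : m ≤ D.length := Nat.le_of_mul_le_mul_right (by rw [hm]; exact hlen) hc
    have hm0 : 0 < m := by
      rcases Nat.eq_zero_or_pos m with h | h
      · exfalso
        apply hne
        apply List.eq_nil_of_length_eq_zero
        rw [← hm, h, Nat.zero_mul]
      · exact h
    have hsymb : ∀ q (hq : q < m), ∃ g,
        (stD q, some g, stD (q+1)) ∈ (D[q]'(by omega)).trans ∧
        ∀ t (ht : t < c), s'[q*c+t]? = some (enc g ⟨t, ht⟩) := by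
      intro q hq
      rcases hblock q (by omega) with h | ⟨_, hall⟩
      · exact h
      · exfalso
        have h2 := hall 0 hc
        rw [Nat.add_zero] at h2
        have h3 : (q+1)*c ≤ m*c := Nat.mul_le_mul_right c (Nat.succ_le_of_lt hq)
        have harr : (q+1)*c = q*c+c := by ring
        have hqlen : q*c < s'.length := by omega
        rw [List.getElem?_eq_getElem hqlen] at h2
        simp at h2
    have hpad : ∀ q (hq : q < D.length), m ≤ q →
        (stD q, none, stD (q+1)) ∈ (D[q]'hq).trans := by
      intro q hq hmq
      rcases hblock q hq with ⟨g, _, hall⟩ | ⟨hT, _⟩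
      · exfalso
        have h2 := hall 0 hc
        rw [Nat.add_zero] at h2
        have h3 : m*c ≤ q*c := Nat.mul_le_mul_right c hmq
        rw [List.getElem?_eq_none (by omega)] at h2
        simp at h2
      · exact hT
    classical
    refine ⟨List.ofFn (fun q : Fin m => (hsymb q q.isLt).choose), ⟨?_, ?_, stD, ?_, ?_⟩, ?_⟩
    · apply List.ne_nil_of_length_pos
      simpa using hm0
    · simpa using hmD
    · intro q hq
      rcases Nat.lt_or_ge q m with hqm | hqm
      · have hget : (List.ofFn (fun q : Fin m => (hsymb q q.isLt).choose))[q]? =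
            some ((hsymb q hqm).choose) := by
          rw [List.getElem?_ofFn]
          simp [List.ofFnNthVal, hqm]
        rw [hget]
        exact (hsymb q hqm).choose_spec.1
      · have hget : (List.ofFn (fun q : Fin m => (hsymb q q.isLt).choose))[q]? = none := by
          rw [List.getElem?_ofFn]
          simp [List.ofFnNthVal, Nat.not_lt_of_ge hqm]
        rw [hget]
        exact hpad q hq hqm
    · intro h
      constructor
      · have h1 : st' 0 = ι₀ (stD 0) := by
          have := hstD 0 (by omega)
          rwa [Nat.zero_mul] at this
        have h2 : stD 0 = p0 := hι₀ (by rw [← h1, ← hp0])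
        rw [h2]
        exact hp0mem
      · simp only [length_newODD] at hfin
        rw [getElem_newODD c enc cls cb ι₀ ι₁ D (D.length*c-1) (by omega)] at hfin
        have hfin2 : st' (D.length*c) ∈ (if D.length*c-1 = D.length*c-1 then
            (D[D.length-1]?).elim ∅ (fun L => ι₀ '' L.final) else ∅) := hfin
        rw [if_pos rfl, List.getElem?_eq_getElem (by omega : D.length - 1 < D.length)] at hfin2
        obtain ⟨pf, hpfmem, hpf⟩ := hfin2
        have h2 : stD D.length = pf := hι₀ (by
          rw [← hstD D.length le_rfl]; exact hpf.symm)
        rw [h2]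
        exact hpfmem
    · apply List.ext_getElem?
      intro j
      have hslen : (List.ofFn (fun q : Fin m => (hsymb q q.isLt).choose)).length = m := by
        simp
      rcases Nat.lt_or_ge j (m*c) with hj | hj
      · have hq : j/c < m := div_lt_of_fin hj
        have ht : j%c < c := Nat.mod_lt _ hc
        have hjeq : (j/c)*c + j%c = j := by
          rw [Nat.mul_comm]; exact Nat.div_add_mod j c
        have h1 := (hsymb (j/c) hq).choose_spec.2 (j%c) ht
        rw [hjeq] at h1
        rw [h1, getElem?_blockEnc_of_lt c enc _ j (by rw [hslen]; exact hj)]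
        refine congrArg (fun x => some (enc x ⟨j%c, ht⟩)) ?_
        rw [List.getElem_ofFn]
      · rw [List.getElem?_eq_none (by omega : s'.length ≤ j)]
        rw [getElem?_blockEnc_of_ge c enc _ j (by rw [hslen]; exact hj)]
  · rintro ⟨s, hs, rfl⟩
    exact accepts_newODD_of c enc cls cb ι₀ ι₁ hc D hs

lemma blockEnc_injective (hc : 0 < c)
    (henc : ∀ g g', (∀ j, enc g j = enc g' j) → g = g') :
    Function.Injective (blockEnc c enc) := by
  intro s s' heq
  have hlen : s.length = s'.length := by
    have := congrArg List.length heq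
    rw [length_blockEnc, length_blockEnc] at this
    exact Nat.eq_of_mul_eq_mul_right hc this
  apply List.ext_getElem hlen
  intro q hq hq'
  apply henc
  intro j
  have hj : q * c + (j : ℕ) < s.length * c := by
    have h1 : (q+1)*c ≤ s.length * c := Nat.mul_le_mul_right c (Nat.succ_le_of_lt hq)
    have harr : (q+1)*c = q*c+c := by ring
    have := j.isLt
    omega
  have hj' : q * c + (j : ℕ) < s'.length * c := by rwa [← hlen]
  have h2 := congrArg (fun l => l[q * c + (j : ℕ)]?) heq
  simp only [getElem?_blockEnc_of_lt c enc s _ hj,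
    getElem?_blockEnc_of_lt c enc s' _ hj'] at h2
  have hdiv : (q * c + (j : ℕ)) / c = q := qct_div hc j.isLt
  have hmod : (q * c + (j : ℕ)) % c = (j : ℕ) := qct_mod j.isLt
  have h3 := Option.some.inj h2
  have e1 : s[(q * c + (j : ℕ)) / c]'(div_lt_of_fin hj) = s[q]'hq := by
    congr 1
  have e2 : s'[(q * c + (j : ℕ)) / c]'(div_lt_of_fin hj') = s'[q]'hq' := by
    congr 1
  rw [e1, e2] at h3
  have e3 : (⟨(q * c + (j : ℕ)) % c, Nat.mod_lt _ (pos_c hj)⟩ : Fin c) = j := by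
    apply Fin.ext
    exact hmod
  rw [e3] at h3
  exact h3

end Defs

section Prune

variable {γL : Type} {w : ℕ}

/-- removing transitions labelled with a given bad symbol -/
def pruneLayer (bad : γL) (L : Layer γL w) : Layer γL w where
  left := L.left
  right := L.right
  trans := {x ∈ L.trans | x.2.1 ≠ some bad}
  initial := L.initial
  final := L.final
  ini := L.ini
  fin := L.fin
  trans_mem := fun t ht => L.trans_mem t ht.1
  initial_sub := L.initial_sub
  final_sub := L.final_sub
  initial_empty := L.initial_empty
  final_empty := L.final_empty

def prune (bad : γL) (D : List (Layer γL w)) : List (Layer γL w) :=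
  D.map (pruneLayer bad)

lemma length_prune (bad : γL) (D : List (Layer γL w)) :
    (prune bad D).length = D.length := by simp [prune]

lemma getElem_prune (bad : γL) (D : List (Layer γL w)) (j : ℕ) (hj : j < D.length) :
    (prune bad D)[j]'(by simpa [length_prune] using hj) = pruneLayer bad (D[j]'hj) := by
  simp [prune]

lemma isODD_prune (bad : γL) (D : List (Layer γL w)) (hD : IsODD D) : IsODD (prune bad D) := by
  obtain ⟨h1, h2, h3⟩ := hD
  refine ⟨by simpa [prune] using h1, ?_, ?_⟩
  · intro i h
    rw [length_prune] at h
    rw [getElem_prune bad D (i+1) h, getElem_prune bad D i (by omega)]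
    exact h2 i h
  · intro i h
    rw [length_prune] at h
    rw [getElem_prune bad D i h, length_prune]
    exact h3 i h

lemma prune_trans_sub {bad : γL} {D : List (Layer γL w)} {j : ℕ} (hj : j < D.length)
    {x : Fin w × Option γL × Fin w}
    (hx : x ∈ ((prune bad D)[j]'(by simpa [length_prune] using hj)).trans) :
    x ∈ (D[j]'hj).trans := by
  rw [getElem_prune bad D j hj] at hx
  exact hx.1

lemma oddLang_prune (bad : γL) (D : List (Layer γL w))
    (hbad : ∀ s ∈ OddLang D, ∀ j (hj : j < s.length), s[j]'hj ≠ bad) :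
    OddLang (prune bad D) = OddLang D := by
  ext s
  constructor
  · rintro ⟨h1, h2, st, htr, hif⟩
    rw [length_prune] at h2
    refine ⟨h1, h2, st, ?_, ?_⟩
    · intro i h
      exact prune_trans_sub h (htr i (by rwa [length_prune]))
    · intro h
      obtain ⟨ha, hb⟩ := hif (by rwa [length_prune])
      constructor
      · rw [getElem_prune bad D 0 h] at ha
        exact ha
      · simp only [length_prune] at hb
        rw [getElem_prune bad D (D.length - 1) (by omega)] at hb
        exact hb
  · intro hs
    have hs' := hs
    obtain ⟨h1, h2, st, htr, hif⟩ := hs'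
    refine ⟨h1, by rwa [length_prune], st, ?_, ?_⟩
    · intro i h
      rw [length_prune] at h
      rw [getElem_prune bad D i h]
      refine ⟨htr i h, ?_⟩
      show s[i]? ≠ some bad
      rcases Nat.lt_or_ge i s.length with hi | hi
      · rw [List.getElem?_eq_getElem hi]
        intro hcon
        exact hbad s hs i hi (Option.some.inj hcon)

      · rw [List.getElem?_eq_none hi]
        simp
    · intro h
      rw [length_prune] at h
      obtain ⟨ha, hb⟩ := hif h
      constructor
      · rw [getElem_prune bad D 0 h]
        exact ha
      · simp only [length_prune]
        rw [getElem_prune bad D (D.length - 1) (by omega)]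
        exact hb

end Prune

section ConvD

lemma length_convD {a : ℕ} {α : Fin a → Type} (us : ∀ i, List (α i)) :
    (convD us).length = Finset.univ.sup fun i => (us i).length := by
  simp [convD]

lemma getElem?_convD_lt {a : ℕ} {α : Fin a → Type} (us : ∀ i, List (α i)) (j : ℕ)
    (hj : j < Finset.univ.sup fun i => (us i).length) :
    (convD us)[j]? = some (fun i => (us i)[j]?) := by
  rw [List.getElem?_eq_getElem (by simpa [length_convD] using hj)]
  unfold convD
  rw [List.getElem_ofFn]

lemma getElem?_convD_ge {a : ℕ} {α : Fin a → Type} (us : ∀ i, List (α i)) (j : ℕ)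
    (hj : (Finset.univ.sup fun i => (us i).length) ≤ j) :
    (convD us)[j]? = none :=
  List.getElem?_eq_none (by simpa [length_convD] using hj)

lemma getElem_convD {a : ℕ} {α : Fin a → Type} (us : ∀ i, List (α i)) (j : ℕ)
    (hj : j < Finset.univ.sup fun i => (us i).length) :
    (convD us)[j]'(by simpa [length_convD] using hj) = fun i => (us i)[j]? := by
  have := getElem?_convD_lt us j hj
  rw [List.getElem?_eq_getElem (by simpa [length_convD] using hj)] at this
  exact Option.some.inj this

lemma sup_mul {a c : ℕ} (f : Fin a → ℕ) :
    (Finset.univ.sup fun i => f i * c) = (Finset.univ.sup f) * c := by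
  apply le_antisymm
  · exact Finset.sup_le fun i _ => Nat.mul_le_mul_right c (Finset.le_sup (Finset.mem_univ i))
  · rcases (Finset.univ (α := Fin a)).eq_empty_or_nonempty with h | h
    · rw [h]
      simp
    · obtain ⟨i, _, hi⟩ := Finset.exists_mem_eq_sup _ h f
      rw [hi]
      exact Finset.le_sup (f := fun i => f i * c) (Finset.mem_univ i)

end ConvD

section Code

variable (σ : Type) [Fintype σ] [Nonempty σ]

/-- block length -/
def cσ : ℕ := max 1 (Nat.clog 2 (Fintype.card σ))

lemma c_pos : 0 < cσ σ := lt_of_lt_of_le Nat.one_pos (le_max_left _ _)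

lemma card_le_pow : Fintype.card σ ≤ 2 ^ cσ σ :=
  le_trans (Nat.le_pow_clog one_lt_two _)
    (Nat.pow_le_pow_right (by norm_num) (le_max_right _ _))

lemma three_le_card_of_two_le_c (h : 2 ≤ cσ σ) : 3 ≤ Fintype.card σ := by
  by_contra h'
  push_neg at h'
  have h2 : Fintype.card σ ≤ 2 ^ 1 := by omega
  have h3 : Nat.clog 2 (Fintype.card σ) ≤ 1 := (Nat.clog_le_iff_le_pow one_lt_two).2 h2
  have : cσ σ ≤ 1 := by
    unfold cσ
    omega
  omega

/-- the binary code of a symbol, most significant bit first -/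
noncomputable def code : σ → Fin (cσ σ) → Bool := fun s j =>
  Nat.testBit (Fintype.equivFin σ s) (cσ σ - 1 - (j : ℕ))

/-- class bound -/
def N1 : ℕ := max 1 (Fintype.card σ - 1)

lemma N1_pos : 0 < N1 σ := lt_of_lt_of_le Nat.one_pos (le_max_left _ _)

/-- prefix class of a symbol after `t` bits -/
noncomputable def clsv : σ → ℕ → Fin (N1 σ) := fun s t =>
  ⟨((Fintype.equivFin σ s : ℕ) >>> (cσ σ - t)) % N1 σ, Nat.mod_lt _ (N1_pos σ)⟩

lemma shift_lt (s : σ) {t : ℕ} (h0 : 0 < t) (htc : t < cσ σ) :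
    ((Fintype.equivFin σ s : ℕ) >>> (cσ σ - t)) < N1 σ := by
  have h3 : 3 ≤ Fintype.card σ := three_le_card_of_two_le_c σ (by omega)
  have hcard : (Fintype.equivFin σ s : ℕ) < Fintype.card σ := (Fintype.equivFin σ s).isLt
  have h1 : 1 ≤ cσ σ - t := by omega
  rw [Nat.shiftRight_eq_div_pow]
  have h2 : 2 ^ 1 ≤ 2 ^ (cσ σ - t) := Nat.pow_le_pow_right (by norm_num) h1
  have h4 : (Fintype.equivFin σ s : ℕ) / 2 ^ (cσ σ - t) ≤
      (Fintype.equivFin σ s : ℕ) / 2 ^ 1 := Nat.div_le_div_left h2 (by norm_num)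
  have h5 : (Fintype.equivFin σ s : ℕ) / 2 ^ 1 ≤ (Fintype.card σ - 1) / 2 := by
    have : (2:ℕ) ^ 1 = 2 := by norm_num
    rw [this]
    exact Nat.div_le_div_right (by omega)
  have h6 : (Fintype.card σ - 1) / 2 < N1 σ := by
    unfold N1
    omega
  omega

lemma clsv_eq_shift (s : σ) {t : ℕ} (h0 : 0 < t) (htc : t < cσ σ) :
    (clsv σ s t : ℕ) = (Fintype.equivFin σ s : ℕ) >>> (cσ σ - t) := by
  unfold clsv
  exact Nat.mod_eq_of_lt (shift_lt σ s h0 htc)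

lemma clsv_H1 {s s' : σ} {t : ℕ} (h0 : 0 < t) (htc : t < cσ σ)
    (h : clsv σ s t = clsv σ s' t) :
    ∀ j (hj : j < cσ σ), j < t → code σ s ⟨j, hj⟩ = code σ s' ⟨j, hj⟩ := by
  have e1 : (Fintype.equivFin σ s : ℕ) >>> (cσ σ - t) =
      (Fintype.equivFin σ s' : ℕ) >>> (cσ σ - t) := by
    rw [← clsv_eq_shift σ s h0 htc, ← clsv_eq_shift σ s' h0 htc, h]
  intro j hj hjt
  unfold code
  have e2 : cσ σ - 1 - j = (cσ σ - t) + (t - 1 - j) := by omega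
  rw [e2, ← Nat.testBit_shiftRight, ← Nat.testBit_shiftRight, e1]

lemma code_inj {s s' : σ} (h : ∀ j, code σ s j = code σ s' j) : s = s' := by
  have heq : (Fintype.equivFin σ s : ℕ) = (Fintype.equivFin σ s' : ℕ) := by
    apply Nat.eq_of_testBit_eq
    intro i
    rcases Nat.lt_or_ge i (cσ σ) with hi | hi
    · have hji : cσ σ - 1 - (cσ σ - 1 - i) = i := by omega
      have := h ⟨cσ σ - 1 - i, by omega⟩
      unfold code at this
      simpa [hji] using this
    · have hb : ∀ x : σ, Nat.testBit (Fintype.equivFin σ x) i = false := by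
        intro x
        apply Nat.testBit_lt_two_pow
        calc ((Fintype.equivFin σ x : ℕ)) < Fintype.card σ := (Fintype.equivFin σ x).isLt
        _ ≤ 2 ^ cσ σ := card_le_pow σ
        _ ≤ 2 ^ i := Nat.pow_le_pow_right (by norm_num) hi
      rw [hb s, hb s']
  exact (Fintype.equivFin σ).injective (Fin.ext heq)

end Code

section Inst

variable (σ : Type) [Fintype σ] [Nonempty σ]

/-- encoding for relation alphabets -/
noncomputable def encRel (a : ℕ) : (Fin a → Option σ) → Fin (cσ σ) → (Fin a → Option Bool) :=
  fun g j i => (g i).map (fun x => code σ x j)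

/-- classes for relation alphabets -/
noncomputable def clsRel (a : ℕ) : (Fin a → Option σ) → ℕ → (Fin a → Option (Fin (N1 σ))) :=
  fun g t i => (g i).map (fun x => clsv σ x t)

lemma H1_dom : ∀ g g' t, 0 < t → t < cσ σ →
    (fun u => some (clsv σ g u)) t = (fun u => some (clsv σ g' u)) t →
    ∀ j (hj : j < cσ σ), j < t → code σ g ⟨j, hj⟩ = code σ g' ⟨j, hj⟩ := by
  intro g g' t h0 htc h j hj hjt
  exact clsv_H1 σ h0 htc (Option.some.inj h) j hj hjt

lemma H1_rel (a : ℕ) : ∀ g g' t, 0 < t → t < cσ σ →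
    clsRel σ a g t = clsRel σ a g' t →
    ∀ j (hj : j < cσ σ), j < t → encRel σ a g ⟨j, hj⟩ = encRel σ a g' ⟨j, hj⟩ := by
  intro g g' t h0 htc h j hj hjt
  funext i
  have hi : (g i).map (fun x => clsv σ x t) = (g' i).map (fun x => clsv σ x t) :=
    congrFun h i
  show (g i).map (fun x => code σ x ⟨j, hj⟩) = (g' i).map (fun x => code σ x ⟨j, hj⟩)
  rcases hgi : g i with _ | x <;> rcases hgi' : g' i with _ | x'
  · rfl
  · rw [hgi, hgi'] at hi
    simp at hi
  · rw [hgi, hgi'] at hi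
    simp at hi
  · rw [hgi, hgi'] at hi
    simp only [Option.map_some] at hi ⊢
    have := clsv_H1 σ h0 htc (Option.some.inj hi) j hj hjt
    rw [this]

lemma henc_dom : ∀ g g' : σ, (∀ j, code σ g j = code σ g' j) → g = g' :=
  fun _ _ h => code_inj σ h

lemma henc_rel (a : ℕ) : ∀ g g' : Fin a → Option σ,
    (∀ j, encRel σ a g j = encRel σ a g' j) → g = g' := by
  intro g g' h
  funext i
  have hi : ∀ j, (g i).map (fun x => code σ x j) = (g' i).map (fun x => code σ x j) :=
    fun j => congrFun (h j) i
  rcases hgi : g i with _ | x <;> rcases hgi' : g' i with _ | x'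
  · rfl
  · have := hi ⟨0, c_pos σ⟩
    rw [hgi, hgi'] at this
    simp at this
  · have := hi ⟨0, c_pos σ⟩
    rw [hgi, hgi'] at this
    simp at this
  · congr 1
    apply code_inj σ
    intro j
    have := hi j
    rw [hgi, hgi'] at this
    simpa using this

/-- commuting of block encoding with convolution -/
lemma blockEnc_convD (a : ℕ) (us : Fin a → List σ) :
    blockEnc (cσ σ) (encRel σ a) (convD us) =
      convD (fun i => blockEnc (cσ σ) (code σ) (us i)) := by
  have hc := c_pos σ
  have hlen2 : (Finset.univ.sup fun i => (blockEnc (cσ σ) (code σ) (us i)).length) =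
      (Finset.univ.sup fun i => (us i).length) * cσ σ := by
    calc (Finset.univ.sup fun i => (blockEnc (cσ σ) (code σ) (us i)).length)
        = Finset.univ.sup fun i => (us i).length * cσ σ := by
          simp only [length_blockEnc]
      _ = _ := sup_mul _
  rcases Nat.lt_or_ge 0 a with ha | ha
  swap
  · -- a = 0 : both sides are lists of functions out of Fin 0
    have ha0 : a = 0 := by omega
    subst ha0
    have h1 : convD us = [] := by
      have : (convD us).length = 0 := by rw [length_convD]; simp
      exact List.eq_nil_of_length_eq_zero this
    have h2 : convD (fun i : Fin 0 => blockEnc (cσ σ) (code σ) (us i)) = [] := by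
      have : (convD (fun i : Fin 0 => blockEnc (cσ σ) (code σ) (us i))).length = 0 := by
        rw [length_convD]; simp
      exact List.eq_nil_of_length_eq_zero this
    rw [h1, h2]
    have : (blockEnc (cσ σ) (encRel σ 0) ([] : List (Fin 0 → Option σ))).length = 0 := by
      rw [length_blockEnc]; simp
    exact List.eq_nil_of_length_eq_zero this
  apply List.ext_getElem?
  intro j
  rcases Nat.lt_or_ge j ((Finset.univ.sup fun i => (us i).length) * cσ σ) with hj | hj
  · have hjc : j < (convD us).length * cσ σ := by rw [length_convD]; exact hj
    rw [getElem?_blockEnc_of_lt _ _ _ j hjc, getElem?_convD_lt _ j (by rw [hlen2]; exact hj)]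
    congr 1
    funext i
    have hdivlt := div_lt_of_fin hjc
    rw [length_convD] at hdivlt
    have hconv := getElem_convD us (j / cσ σ) hdivlt
    show encRel σ a ((convD us)[j / cσ σ]'(by rw [length_convD]; exact hdivlt))
      ⟨j % cσ σ, Nat.mod_lt _ (pos_c hjc)⟩ i = _
    rw [hconv]
    show ((us i)[j / cσ σ]?).map (fun x => code σ x ⟨j % cσ σ, Nat.mod_lt _ (pos_c hjc)⟩) = _
    rcases Nat.lt_or_ge j ((us i).length * cσ σ) with hji | hji
    · have hd : j / cσ σ < (us i).length := div_lt_of_fin hji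
      rw [getElem?_blockEnc_of_lt _ _ _ j hji, List.getElem?_eq_getElem hd]
      rfl
    · have hd : (us i).length ≤ j / cσ σ :=
        (Nat.le_div_iff_mul_le hc).2 hji
      rw [getElem?_blockEnc_of_ge _ _ _ j hji, List.getElem?_eq_none hd]
      rfl
  · rw [getElem?_blockEnc_of_ge _ _ _ j (by rw [length_convD]; exact hj),
      getElem?_convD_ge _ j (by rw [hlen2]; exact hj)]

/-- no string of a tensor language over a positive arity contains the all-padding symbol -/
lemma tensor_no_allnone {a : ℕ} (ha : 0 < a) (L0 : Set (List σ))
    (hL0 : ∀ u ∈ L0, u ≠ []) :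
    ∀ s ∈ tensorLang (a := a) L0, ∀ j (hj : j < s.length),
      s[j]'hj ≠ (fun _ => none : Fin a → Option σ) := by
  rintro s ⟨us, hus, rfl⟩ j hj hcon
  rw [length_convD] at hj
  obtain ⟨i, _, hi⟩ := Finset.lt_sup_iff.1 hj
  rw [getElem_convD us j hj] at hcon
  have := congrFun hcon i
  rw [List.getElem?_eq_getElem hi] at this
  simp at this

/-- packing a finite type into an initial segment -/
noncomputable def pack (α : Type) [Fintype α] {W : ℕ} (hW : 0 < W) : α → Fin W :=
  if h : Fintype.card α ≤ W then fun a => Fin.castLE h (Fintype.equivFin α a)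
  else fun _ => ⟨0, hW⟩

lemma pack_inj (α : Type) [Fintype α] {W : ℕ} (hW : 0 < W)
    (h : Fintype.card α ≤ W) : Function.Injective (pack α hW) := by
  unfold pack
  rw [dif_pos h]
  intro x y hxy
  exact (Fintype.equivFin α).injective (Fin.castLE_injective h hxy)

end Inst

end ODDEnc

theorem stmt1' (σ : Type) [Fintype σ] [Nonempty σ] (w : ℕ) (hw : 0 < w)
    (r : ℕ) (ar : Fin r → ℕ) (har : ∀ i, 0 < ar i)
    (M : Type) [Finite M] [Nonempty M] (SM : (vocLang r ar).Structure M)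
    (h : IsDecisional σ w ar M SM) :
    IsDecisional Bool (w ^ 2 * Fintype.card σ ^ max 1 (Finset.univ.sup ar)) ar M SM := by
  classical
  obtain ⟨D₀, Ds, ⟨hODD0, hstr⟩, ⟨e⟩⟩ := h
  set c := ODDEnc.cσ σ with hcdef
  have hc : 0 < c := ODDEnc.c_pos σ
  set n := Fintype.card σ with hndef
  set amax := max 1 (Finset.univ.sup ar) with hamaxdef
  set W := w ^ 2 * n ^ amax with hWdef
  have hn : 0 < n := Fintype.card_pos
  have hW0 : 0 < W := by
    apply Nat.mul_pos
    · exact Nat.pow_pos hw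
    · exact Nat.pow_pos hn
  have h1namax : 1 ≤ n ^ amax := Nat.one_le_pow _ _ hn
  have hwW : w ≤ W := by
    calc w ≤ w * w := Nat.le_mul_of_pos_left w hw
    _ = w ^ 2 := (sq w).symm
    _ = w ^ 2 * 1 := (Nat.mul_one _).symm
    _ ≤ w ^ 2 * n ^ amax := Nat.mul_le_mul_left _ h1namax
  let ι₀ : Fin w → Fin W := fun p => Fin.castLE hwW p
  have hι₀ : Function.Injective ι₀ := fun x y hxy => Fin.castLE_injective hwW hxy
  have hbound : ∀ a : ℕ, a ≤ amax → w * n ^ a ≤ W := by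
    intro a ha
    calc w * n ^ a ≤ (w * w) * n ^ amax :=
        Nat.mul_le_mul (Nat.le_mul_of_pos_left w hw) (Nat.pow_le_pow_right hn ha)
    _ = W := by rw [hWdef, sq]
  have hN1 : 2 ≤ c → ODDEnc.N1 σ + 1 = n := by
    intro h2
    have h3 := ODDEnc.three_le_card_of_two_le_c σ h2
    unfold ODDEnc.N1
    omega
  let ι₁dom : Fin w × Option (Fin (ODDEnc.N1 σ)) → Fin W := ODDEnc.pack _ hW0
  have hι₁dom : 2 ≤ c → Function.Injective ι₁dom := by
    intro h2
    apply ODDEnc.pack_inj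
    have hcardeq : Fintype.card (Fin w × Option (Fin (ODDEnc.N1 σ))) =
        w * (ODDEnc.N1 σ + 1) := by simp
    rw [hcardeq, hN1 h2]
    have h1 : 1 ≤ amax := le_max_left _ _
    calc w * n = w * n ^ 1 := by rw [pow_one]
    _ ≤ W := hbound 1 h1
  let ι₁rel : ∀ i : Fin r, Fin w × (Fin (ar i) → Option (Fin (ODDEnc.N1 σ))) → Fin W :=
    fun i => ODDEnc.pack _ hW0
  have hι₁rel : ∀ i, 2 ≤ c → Function.Injective (ι₁rel i) := by
    intro i h2
    apply ODDEnc.pack_inj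
    have hcardeq : Fintype.card (Fin w × (Fin (ar i) → Option (Fin (ODDEnc.N1 σ)))) =
        w * (ODDEnc.N1 σ + 1) ^ (ar i) := by simp
    rw [hcardeq, hN1 h2]
    exact hbound (ar i) (le_trans (Finset.le_sup (Finset.mem_univ i)) (le_max_right _ _))
  let clsdom : σ → ℕ → Option (Fin (ODDEnc.N1 σ)) := fun s t => some (ODDEnc.clsv σ s t)
  let D₀' : List (Layer Bool W) :=
    ODDEnc.newODD c (ODDEnc.code σ) clsdom none ι₀ ι₁dom D₀
  let Dp : ∀ i : Fin r, List (Layer (Fin (ar i) → Option σ) w) :=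
    fun i => ODDEnc.prune (fun _ => none) (Ds i)
  let Ds' : ∀ i : Fin r, List (Layer (Fin (ar i) → Option Bool) W) := fun i =>
    ODDEnc.newODD c (ODDEnc.encRel σ (ar i)) (ODDEnc.clsRel σ (ar i)) (fun _ => none)
      ι₀ (ι₁rel i) (Dp i)
  have hmem_ne : ∀ u ∈ OddLang D₀, u ≠ [] := fun u hu => hu.1
  have hODDi : ∀ i, IsODD (Ds i) := fun i => (hstr i).1
  have hleni : ∀ i, (Ds i).length = D₀.length := fun i => (hstr i).2.1
  have htensi : ∀ i, OddLang (Ds i) ⊆ tensorLang (OddLang D₀) := fun i => (hstr i).2.2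
  have hLpr : ∀ i, OddLang (Dp i) = OddLang (Ds i) := by
    intro i
    apply ODDEnc.oddLang_prune
    intro s hs j hj
    exact ODDEnc.tensor_no_allnone σ (har i) (OddLang D₀) hmem_ne s (htensi i hs) j hj
  have H2dom : ∀ j (hj : j < D₀.length) p g q', (p, some g, q') ∈ (D₀[j]'hj).trans →
      ∀ t, 0 < t → t < c → clsdom g t ≠ none := by
    intro j hj p g q' hmem t h0 htc hcon
    exact Option.some_ne_none _ hcon
  have hiff0 := ODDEnc.accepts_newODD_iff c (ODDEnc.code σ) clsdom none ι₀ ι₁dom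
    hc hw hι₀ hι₁dom (ODDEnc.H1_dom σ) D₀ H2dom hODD0
  have hlang0 : ∀ s', s' ∈ OddLang D₀' ↔
      ∃ s ∈ OddLang D₀, ODDEnc.blockEnc c (ODDEnc.code σ) s = s' := by
    intro s'
    rw [show (s' ∈ OddLang D₀') = OddAccepts D₀' s' from rfl, hiff0 s']
    constructor
    · rintro ⟨s, hs, rfl⟩
      exact ⟨s, hs, rfl⟩
    · rintro ⟨s, hs, rfl⟩
      exact ⟨s, hs, rfl⟩
  have H2rel : ∀ i, ∀ j (hj : j < (Dp i).length) p g q',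
      (p, some g, q') ∈ ((Dp i)[j]'hj).trans →
      ∀ t, 0 < t → t < c → ODDEnc.clsRel σ (ar i) g t ≠ (fun _ => none) := by
    intro i j hj p g q' hmem t h0 htc hcon
    have hj' : j < (Ds i).length := by rwa [ODDEnc.length_prune] at hj
    rw [ODDEnc.getElem_prune (fun _ => none) (Ds i) j hj'] at hmem
    apply hmem.2
    show some g = some (fun _ => none)
    congr 1
    funext i'
    have h2 : (g i').map (fun x => ODDEnc.clsv σ x t) = none := congrFun hcon i'
    rcases hgi : g i' with _ | x
    · rfl
    · rw [hgi] at h2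
      simp at h2
  have hODDp : ∀ i, IsODD (Dp i) := fun i => ODDEnc.isODD_prune _ (Ds i) (hODDi i)
  have hiffi : ∀ i s', OddAccepts (Ds' i) s' ↔
      ∃ s, OddAccepts (Dp i) s ∧ s' = ODDEnc.blockEnc c (ODDEnc.encRel σ (ar i)) s :=
    fun i => ODDEnc.accepts_newODD_iff c (ODDEnc.encRel σ (ar i)) (ODDEnc.clsRel σ (ar i))
      (fun _ => none) ι₀ (ι₁rel i) hc hw hι₀ (hι₁rel i) (ODDEnc.H1_rel σ (ar i))
      (Dp i) (H2rel i) (hODDp i)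
  refine ⟨D₀', Ds', ⟨?_, ?_⟩, ?_⟩
  · exact ODDEnc.isODD_newODD c _ _ _ ι₀ ι₁dom hc D₀ hODD0
  · intro i
    refine ⟨ODDEnc.isODD_newODD c _ _ _ ι₀ (ι₁rel i) hc (Dp i) (hODDp i), ?_, ?_⟩
    · show (ODDEnc.newODD c (ODDEnc.encRel σ (ar i)) (ODDEnc.clsRel σ (ar i))
          (fun _ => none) ι₀ (ι₁rel i) (Dp i)).length =
        (ODDEnc.newODD c (ODDEnc.code σ) clsdom none ι₀ ι₁dom D₀).length
      rw [ODDEnc.length_newODD, ODDEnc.length_newODD, ODDEnc.length_prune, hleni i]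
    · intro S hS
      obtain ⟨x, hx, rfl⟩ := (hiffi i S).1 hS
      have hx' : x ∈ OddLang (Ds i) := by rw [← hLpr i]; exact hx
      obtain ⟨us, hus, hconv⟩ := htensi i hx'
      refine ⟨fun m => ODDEnc.blockEnc c (ODDEnc.code σ) (us m), ?_, ?_⟩
      · intro m
        exact (hlang0 _).2 ⟨us m, hus m, rfl⟩
      · rw [← hconv]
        exact (ODDEnc.blockEnc_convD σ (ar i) us).symm
  · -- the isomorphism
    have hbij : Function.Bijective (fun s : {s : List σ // s ∈ OddLang D₀} =>
        (⟨ODDEnc.blockEnc c (ODDEnc.code σ) s.val, (hlang0 _).2 ⟨s.val, s.2, rfl⟩⟩ :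
          {S : List Bool // S ∈ OddLang D₀'})) := by
      constructor
      · intro x y hxy
        apply Subtype.ext
        exact ODDEnc.blockEnc_injective c _ hc (ODDEnc.henc_dom σ)
          (congrArg Subtype.val hxy)
      · rintro ⟨S, hS⟩
        obtain ⟨s, hs, hEq⟩ := (hlang0 S).1 hS
        exact ⟨⟨s, hs⟩, Subtype.ext hEq⟩
    let eqv := Equiv.ofBijective _ hbij
    have hval : ∀ X : {S : List Bool // S ∈ OddLang D₀'},
        X.val = ODDEnc.blockEnc c (ODDEnc.code σ) (eqv.symm X).val := by
      intro X
      have h2 := eqv.apply_symm_apply X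
      exact (congrArg Subtype.val h2).symm
    letI S1 : (vocLang r ar).Structure {s : List σ // s ∈ OddLang D₀} := derivedStr D₀ Ds
    letI S2 : (vocLang r ar).Structure {S : List Bool // S ∈ OddLang D₀'} :=
      derivedStr D₀' Ds'
    refine ⟨FirstOrder.Language.Equiv.comp e ?_⟩
    refine { toEquiv := eqv.symm, map_fun' := ?_, map_rel' := ?_ }
    · intro nn f xx
      exact Empty.elim f
    · intro nn Rl x
      obtain ⟨i, hi⟩ := Rl
      show convD (fun m => (eqv.symm (x (Fin.cast hi m))).val) ∈ OddLang (Ds i) ↔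
        convD (fun m => (x (Fin.cast hi m)).val) ∈ OddLang (Ds' i)
      have hfun : (fun m : Fin (ar i) => (x (Fin.cast hi m)).val) =
          fun m => ODDEnc.blockEnc c (ODDEnc.code σ) ((eqv.symm (x (Fin.cast hi m))).val) := by
        funext m
        exact hval (x (Fin.cast hi m))
      constructor
      · intro hmem
        rw [hfun]
        refine (hiffi i _).2 ⟨convD (fun m => (eqv.symm (x (Fin.cast hi m))).val), ?_, ?_⟩
        · show _ ∈ OddLang (Dp i)
          rw [hLpr i]
          exact hmem
        · exact (ODDEnc.blockEnc_convD σ (ar i) _).symm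
      · intro hmem
        obtain ⟨xx, hxx, hEq⟩ := (hiffi i _).1 hmem
        rw [hfun] at hEq
        have h3 : ODDEnc.blockEnc c (ODDEnc.encRel σ (ar i))
            (convD (fun m => (eqv.symm (x (Fin.cast hi m))).val)) =
            ODDEnc.blockEnc c (ODDEnc.encRel σ (ar i)) xx := by
          rw [ODDEnc.blockEnc_convD]
          exact hEq
        have h4 := ODDEnc.blockEnc_injective c _ hc (ODDEnc.henc_rel σ (ar i)) h3
        rw [h4, ← hLpr i]
        exact hxx

/-- If a finite `τ`-structure is `(Σ,w)`-decisional, then it is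
`({0,1}, w²·|Σ|^{max{1,a₁,…,aᵣ}})`-decisional. -/
theorem stmt1 (σ : Type) [Fintype σ] [Nonempty σ] (w : ℕ) (hw : 0 < w)
    (r : ℕ) (ar : Fin r → ℕ) (har : ∀ i, 0 < ar i)
    (M : Type) [Finite M] [Nonempty M] (SM : (vocLang r ar).Structure M)
    (h : IsDecisional σ w ar M SM) :
    IsDecisional Bool (w ^ 2 * Fintype.card σ ^ max 1 (Finset.univ.sup ar)) ar M SM := by
  exact stmt1' σ w hw r ar har M SM h
end

section
/- Let τ be the relational vocabulary of directed graphs (one binary relation symbol E), and for each k ∈ ℕ⁺ let H_k be the k-dimensional hypercube graph: the τ-structure with domain {0,1}^k whose edge relation consists of all ordered pairs of k-bit strings that differ in exactly one position. Then the class H = {H_k : k ∈ ℕ⁺} is ({0,1},2)-regular-decisional; that is, there exists a regular sub-relation R ⊆ D({0,1},2,τ) such that the class of τ-structures isomorphic to S(T) for some T ∈ R is exactly H. -/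
open FirstOrder

/-- The `k`-dimensional hypercube graph, as a structure over the vocabulary of
directed graphs (one binary relation symbol): its domain is the set of `k`-bit
binary strings and its edge relation consists of all ordered pairs of `k`-bit
strings differing in exactly one position. -/
def hypercubeStr (k : ℕ) : (vocLang 1 (fun _ => 2)).Structure (Fin k → Bool) where
  funMap := fun f _ => f.elim
  RelMap := fun {n} Rl x =>
    match Rl with
    | ⟨_, h⟩ =>
      ∃! j : Fin k,
        x (Fin.cast h ⟨0, Nat.zero_lt_two⟩) j ≠ x (Fin.cast h ⟨1, Nat.one_lt_two⟩) j

/-! ### Auxiliary development -/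

abbrev Sig1 : Type := Fin 2 → Option Bool

def L0 (i f : Bool) : Layer Bool 2 where
  left := {0}
  right := {0}
  trans := {t | t.1 = 0 ∧ t.2.2 = 0 ∧ ∃ b : Bool, t.2.1 = some b}
  initial := if i then {0} else ∅
  final := if f then {0} else ∅
  ini := i
  fin := f
  trans_mem := fun t ht => ⟨ht.1, ht.2.1⟩
  initial_sub := by cases i <;> simp
  final_sub := by cases f <;> simp
  initial_empty := by intro h; simp [h]
  final_empty := by intro h; simp [h]

def L1 (i f : Bool) : Layer Sig1 2 where
  left := Set.univ
  right := Set.univ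
  trans := {t | ∃ g : Sig1, t.2.1 = some g ∧ (g 0).isSome ∧ (g 1).isSome ∧
      ((g 0 = g 1 ∧ t.2.2 = t.1) ∨ (g 0 ≠ g 1 ∧ t.1 = 0 ∧ t.2.2 = 1))}
  initial := if i then {0} else ∅
  final := if f then {1} else ∅
  ini := i
  fin := f
  trans_mem := fun _ _ => ⟨trivial, trivial⟩
  initial_sub := fun _ _ => trivial
  final_sub := fun _ _ => trivial
  initial_empty := by intro h; simp [h]
  final_empty := by intro h; simp [h]

def D0 (k : ℕ) : List (Layer Bool 2) :=
  List.ofFn fun j : Fin k => L0 (decide (j.val = 0)) (decide (j.val = k - 1))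

def D1 (k : ℕ) : List (Layer Sig1 2) :=
  List.ofFn fun j : Fin k => L1 (decide (j.val = 0)) (decide (j.val = k - 1))

@[simp] lemma D0_length (k : ℕ) : (D0 k).length = k := by simp [D0]
@[simp] lemma D1_length (k : ℕ) : (D1 k).length = k := by simp [D1]

lemma D0_get (k j : ℕ) (h : j < (D0 k).length) :
    (D0 k)[j] = L0 (decide (j = 0)) (decide (j = k - 1)) := by
  simp [D0]

lemma D1_get (k j : ℕ) (h : j < (D1 k).length) :
    (D1 k)[j] = L1 (decide (j = 0)) (decide (j = k - 1)) := by
  simp [D1]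

lemma isODD_D0 (k : ℕ) (hk : 0 < k) : IsODD (D0 k) := by
  refine ⟨by simp [← List.length_pos_iff]; omega, ?_, ?_⟩
  · intro i h
    rw [D0_get, D0_get] <;> simp [L0]
  · intro i h
    rw [D0_get]
    simp [L0]

lemma isODD_D1 (k : ℕ) (hk : 0 < k) : IsODD (D1 k) := by
  refine ⟨by simp [← List.length_pos_iff]; omega, ?_, ?_⟩
  · intro i h
    rw [D1_get, D1_get] <;> simp [L1]
  · intro i h
    rw [D1_get]
    simp [L1]
lemma mem_lang0 (k : ℕ) (hk : 0 < k) (s : List Bool) :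
    s ∈ OddLang (D0 k) ↔ s.length = k := by
  constructor
  · rintro ⟨hne, hlen, st, htr, hif⟩
    simp only [D0_length] at hlen
    have h1 : k - 1 < (D0 k).length := by simp; omega
    have := htr (k - 1) h1
    rw [D0_get] at this
    obtain ⟨-, -, b, hb⟩ := this
    have : k - 1 < s.length := by
      by_contra hcon
      rw [List.getElem?_eq_none (by omega)] at hb
      simp at hb
    omega
  · intro hlen
    refine ⟨by rw [← List.length_pos_iff]; omega, by simp [hlen], fun _ => 0, ?_, ?_⟩
    · intro i h
      rw [D0_get]
      refine ⟨rfl, rfl, s[i]'(by rw [hlen]; simpa using h), ?_⟩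
      exact List.getElem?_eq_getElem _
    · intro h
      rw [D0_get, D0_get]
      constructor <;> simp [L0]
lemma fin2_cases (a : Fin 2) : a = 0 ∨ a = 1 := by omega

lemma stay_one (k : ℕ) (st : ℕ → Fin 2)
    (mono : ∀ i < k, st i = 1 → st (i + 1) = 1) :
    ∀ m n, m ≤ n → n ≤ k → st m = 1 → st n = 1 := by
  intro m n hmn hnk h1
  induction n, hmn using Nat.le_induction with
  | base => exact h1
  | succ n hmn ih => exact mono n (by omega) (ih (by omega))

lemma flip_unique (k : ℕ) (st : ℕ → Fin 2) (h0 : st 0 = 0) (hk : st k = 1)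
    (mono : ∀ i < k, st i = 1 → st (i + 1) = 1) :
    ∃! j : ℕ, j < k ∧ st j ≠ 1 ∧ st (j + 1) = 1 := by
  have hex : ∃ m, st m = 1 := ⟨k, hk⟩
  set m := Nat.find hex with hm
  have hm1 : st m = 1 := Nat.find_spec hex
  have hmk : m ≤ k := Nat.find_min' hex hk
  have hm0 : m ≠ 0 := by
    intro h
    rw [h] at hm1
    rw [h0] at hm1
    exact absurd hm1 (by decide)
  refine ⟨m - 1, ⟨by omega, ?_, by rw [Nat.sub_add_cancel (by omega)]; exact hm1⟩, ?_⟩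
  · exact Nat.find_min hex (by omega)
  · rintro j ⟨hj, hj0, hj1⟩
    by_contra hne
    rcases Nat.lt_or_ge j (m - 1) with h | h
    · exact (Nat.find_min hex (show j + 1 < m by omega)) hj1
    · have : m ≤ j := by omega
      exact hj0 (stay_one k st mono m j this (by omega) hm1)
lemma mem_lang1 (k : ℕ) (hk : 0 < k) (s : List Sig1) :
    s ∈ OddLang (D1 k) ↔
      s.length = k ∧
      (∀ j < k, ∃ g : Sig1, s[j]? = some g ∧ (g 0).isSome ∧ (g 1).isSome) ∧
      (∃! j : ℕ, ∃ g : Sig1, s[j]? = some g ∧ g 0 ≠ g 1) := by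
  constructor
  · rintro ⟨hne, hlen, st, htr, hif⟩
    simp only [D1_length] at hlen
    have hsome : ∀ j < k, ∃ g : Sig1, s[j]? = some g ∧ (g 0).isSome ∧ (g 1).isSome := by
      intro j hj
      have := htr j (by simp [hj])
      rw [D1_get] at this
      simp only [L1, Set.mem_setOf_eq] at this
      obtain ⟨g, hg, h0, h1, -⟩ := this
      exact ⟨g, hg, h0, h1⟩
    have hlen' : s.length = k := by
      obtain ⟨g, hg, -⟩ := hsome (k - 1) (by omega)
      have : k - 1 < s.length := by
        by_contra hcon
        rw [List.getElem?_eq_none (by omega)] at hg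
        simp at hg
      omega
    obtain ⟨hini, hfin⟩ := hif (by simp; omega)
    have h0 : st 0 = 0 := by
      rw [D1_get] at hini
      simpa [L1] using hini
    have hk1 : st k = 1 := by
      simp only [D1_length] at hfin
      rw [D1_get] at hfin
      simpa [L1] using hfin
    have mono : ∀ i < k, st i = 1 → st (i + 1) = 1 := by
      intro i hi h1
      have := htr i (by simp [hi])
      rw [D1_get] at this
      simp only [L1, Set.mem_setOf_eq] at this
      obtain ⟨g, hg, -, -, hcase⟩ := this
      rcases hcase with ⟨-, heq⟩ | ⟨-, hi0, -⟩
      · rw [heq, h1]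
      · omega
    have flip := flip_unique k st h0 hk1 mono
    have key : ∀ j : ℕ, (∃ g : Sig1, s[j]? = some g ∧ g 0 ≠ g 1) ↔
        (j < k ∧ st j ≠ 1 ∧ st (j + 1) = 1) := by
      intro j
      constructor
      · rintro ⟨g, hg, hne'⟩
        have hj : j < k := by
          by_contra hcon
          rw [List.getElem?_eq_none (by omega)] at hg
          simp at hg
        have := htr j (by simp [hj])
        rw [D1_get] at this
        simp only [L1, Set.mem_setOf_eq] at this
        obtain ⟨g', hg', -, -, hcase⟩ := this
        rw [hg] at hg'
        obtain rfl := Option.some.inj hg'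
        rcases hcase with ⟨heq, -⟩ | ⟨-, hj0, hj1⟩
        · exact absurd heq hne'
        · exact ⟨hj, by omega, hj1⟩
      · rintro ⟨hj, hne1, h1⟩
        have := htr j (by simp [hj])
        rw [D1_get] at this
        simp only [L1, Set.mem_setOf_eq] at this
        obtain ⟨g, hg, -, -, hcase⟩ := this
        refine ⟨g, hg, ?_⟩
        rcases hcase with ⟨heq, heq'⟩ | ⟨hd, -⟩
        · omega
        · exact hd
    exact ⟨hlen', hsome, (existsUnique_congr key).mpr flip⟩
  · rintro ⟨hlen, hsome, j0, ⟨g0, hg0, hne0⟩, huniq⟩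
    have hj0 : j0 < k := by
      by_contra hcon
      rw [List.getElem?_eq_none (by omega)] at hg0
      simp at hg0
    refine ⟨by rw [← List.length_pos_iff]; omega, by simp [hlen], fun i => if i ≤ j0 then 0 else 1,
      ?_, ?_⟩
    · intro i h
      simp only [D1_length] at h
      rw [D1_get]
      obtain ⟨g, hg, hs0, hs1⟩ := hsome i h
      refine ⟨g, hg, hs0, hs1, ?_⟩
      by_cases hd : g 0 = g 1
      · left
        refine ⟨hd, ?_⟩
        have hne : i ≠ j0 := by
          rintro rfl
          rw [hg0] at hg
          obtain rfl := Option.some.inj hg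
          exact hne0 hd
        rcases Nat.lt_or_ge i j0 with hlt | hge
        · simp [Nat.le_of_lt hlt, show i + 1 ≤ j0 by omega]
        · have : ¬ i ≤ j0 := by omega
          simp [this, show ¬ i + 1 ≤ j0 by omega]
      · right
        have : i = j0 := huniq i ⟨g, hg, hd⟩
        subst this
        exact ⟨hd, by simp, by simp⟩
    · intro h
      constructor
      · rw [D1_get]
        simp [L1]
      · simp only [D1_length]
        rw [D1_get]
        simp [L1, show ¬ k ≤ j0 by omega]
lemma convD_length {a : ℕ} {α : Fin a → Type} (us : ∀ i, List (α i)) :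
    (convD us).length = Finset.univ.sup fun i => (us i).length := by
  simp [convD]

lemma convD_getElem {a : ℕ} {α : Fin a → Type} (us : ∀ i, List (α i)) (j : ℕ)
    (h : j < (convD us).length) : (convD us)[j] = fun i => (us i)[j]? := by
  simp [convD] at h ⊢

lemma sup_const_fin2 (k : ℕ) (f : Fin 2 → ℕ) (h : ∀ i, f i = k) :
    (Finset.univ.sup f) = k := by
  rw [show f = fun _ => k from funext h]
  exact Finset.sup_const Finset.univ_nonempty k

lemma convD_length_pair (k : ℕ) (f : Fin 2 → List Bool) (h : ∀ i, (f i).length = k) :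
    (convD f).length = k := by
  rw [convD_length]
  exact sup_const_fin2 k _ h

lemma lang1_sub_tensor (k : ℕ) (hk : 0 < k) :
    OddLang (D1 k) ⊆ tensorLang (OddLang (D0 k)) := by
  intro s hs
  rw [mem_lang1 k hk] at hs
  obtain ⟨hlen, hsome, -⟩ := hs
  refine ⟨fun i => List.ofFn fun j : Fin k => ((s[j.val]'(by omega) : Sig1) i).getD true,
    fun i => by rw [mem_lang0 k hk]; simp, ?_⟩
  have hl : ∀ i : Fin 2, (List.ofFn fun j : Fin k =>
      ((s[j.val]'(by omega) : Sig1) i).getD true).length = k := fun i => by simp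
  apply List.ext_getElem
  · rw [convD_length_pair k _ hl, hlen]
  · intro j h1 h2
    rw [convD_getElem]
    have hj : j < k := by rw [convD_length_pair k _ hl] at h1; exact h1
    obtain ⟨g, hg, hg0, hg1⟩ := hsome j hj
    have hgj : s[j]'h2 = g := by
      have := List.getElem?_eq_getElem (l := s) (i := j) h2
      rw [hg] at this
      exact (Option.some.inj this).symm
    funext i
    rw [List.getElem?_eq_getElem (by simp [hj]), List.getElem_ofFn]
    simp only [hgj]
    have hsome' : (g i).isSome := by
      rcases fin2_cases i with rfl | rfl
      · exact hg0
      · exact hg1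
    obtain ⟨b, hb⟩ := Option.isSome_iff_exists.mp hsome'
    simp [hb]

lemma structural_k (k : ℕ) (hk : 0 < k) :
    IsStructural (D0 k) (fun _ : Fin 1 => D1 k) := by
  refine ⟨isODD_D0 k hk, fun i => ⟨isODD_D1 k hk, by simp, lang1_sub_tensor k hk⟩⟩
lemma euFin {k : ℕ} (Q : Fin k → Prop) :
    (∃! j : ℕ, ∃ h : j < k, Q ⟨j, h⟩) ↔ ∃! j : Fin k, Q j := by
  constructor
  · rintro ⟨j, ⟨hj, hq⟩, hu⟩
    exact ⟨⟨j, hj⟩, hq, fun y hy => Fin.ext (hu y.val ⟨y.isLt, by simpa using hy⟩)⟩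
  · rintro ⟨j, hq, hu⟩
    refine ⟨j.val, ⟨j.isLt, by simpa using hq⟩, ?_⟩
    rintro y ⟨hy, hqy⟩
    exact congrArg Fin.val (hu ⟨y, hy⟩ hqy)

lemma memD1_iff_existsUnique (k : ℕ) (hk : 0 < k) (f : Fin 2 → List Bool)
    (hlf : ∀ i, (f i).length = k) :
    convD f ∈ OddLang (D1 k) ↔ ∃! j : ℕ, (f 0)[j]? ≠ (f 1)[j]? := by
  rw [mem_lang1 k hk]
  have hcl : (convD f).length = k := convD_length_pair k f hlf
  have hget : ∀ j < k, (convD f)[j]? = some (fun i => (f i)[j]?) := by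
    intro j hj
    rw [List.getElem?_eq_getElem (by omega), convD_getElem]
  have key : ∀ j : ℕ, (∃ g : Sig1, (convD f)[j]? = some g ∧ g 0 ≠ g 1) ↔
      ((f 0)[j]? ≠ (f 1)[j]?) := by
    intro j
    by_cases hj : j < k
    · rw [hget j hj]
      constructor
      · rintro ⟨g, hg, hne⟩
        obtain rfl := Option.some.inj hg
        exact hne
      · intro hne
        exact ⟨_, rfl, hne⟩
    · have h0 : (f 0)[j]? = none := List.getElem?_eq_none (by rw [hlf 0]; omega)
      have h1 : (f 1)[j]? = none := List.getElem?_eq_none (by rw [hlf 1]; omega)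
      have hc : (convD f)[j]? = none := List.getElem?_eq_none (by omega)
      simp [h0, h1, hc]
  constructor
  · rintro ⟨-, -, hu⟩
    exact (existsUnique_congr key).mp hu
  · intro hu
    refine ⟨hcl, ?_, (existsUnique_congr key).mpr hu⟩
    intro j hj
    refine ⟨fun i => (f i)[j]?, hget j hj, ?_, ?_⟩
    · simp [List.getElem?_eq_getElem (show j < (f 0).length by rw [hlf 0]; omega)]
    · simp [List.getElem?_eq_getElem (show j < (f 1).length by rw [hlf 1]; omega)]
def cubeEquivE (k : ℕ) (hk : 0 < k) :
    (Fin k → Bool) ≃ { s : List Bool // s ∈ OddLang (D0 k) } where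
  toFun x := ⟨List.ofFn x, by rw [mem_lang0 k hk]; simp⟩
  invFun s := fun j => s.val[j.val]'(by rw [(mem_lang0 k hk s.val).mp s.2]; exact j.isLt)
  left_inv x := by funext j; simp
  right_inv s := by
    apply Subtype.ext
    apply List.ext_getElem
    · simp [(mem_lang0 k hk s.val).mp s.2]
    · intro j h1 h2
      simp
def cubeEquiv (k : ℕ) (hk : 0 < k) :
    @FirstOrder.Language.Equiv (vocLang 1 (fun _ => 2)) (Fin k → Bool)
      { s : List Bool // s ∈ OddLang (D0 k) } (hypercubeStr k)
      (derivedStr (D0 k) (fun _ => D1 k)) :=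
  @FirstOrder.Language.Equiv.mk (vocLang 1 (fun _ => 2)) (Fin k → Bool)
    { s : List Bool // s ∈ OddLang (D0 k) } (hypercubeStr k)
    (derivedStr (D0 k) (fun _ => D1 k)) (cubeEquivE k hk)
    (fun {n} f x => f.elim)
    (by
      intro n r x
      obtain ⟨i, h⟩ := r
      show convD (fun m : Fin 2 => (List.ofFn (x (Fin.cast h m)))) ∈ OddLang (D1 k) ↔ _
      rw [memD1_iff_existsUnique k hk _ (fun i => by simp)]
      show _ ↔ ∃! j : Fin k,
        x (Fin.cast h ⟨0, Nat.zero_lt_two⟩) j ≠ x (Fin.cast h ⟨1, Nat.one_lt_two⟩) j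
      rw [← euFin]
      apply existsUnique_congr
      intro j
      by_cases hj : j < k
      · have e0 : (List.ofFn (x (Fin.cast h 0)))[j]? =
            some (x (Fin.cast h 0) ⟨j, hj⟩) := by simp [hj]
        have e1 : (List.ofFn (x (Fin.cast h 1)))[j]? =
            some (x (Fin.cast h 1) ⟨j, hj⟩) := by simp [hj]
        rw [e0, e1]
        simp only [ne_eq, Option.some.injEq]
        exact ⟨fun hne => ⟨hj, hne⟩, fun ⟨_, hne⟩ => hne⟩
      · have e0 : (List.ofFn (x (Fin.cast h 0)))[j]? = none :=
          List.getElem?_eq_none (by simpa using hj)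
        have e1 : (List.ofFn (x (Fin.cast h 1)))[j]? = none :=
          List.getElem?_eq_none (by simpa using hj)
        simp [e0, e1, hj, List.ofFnNthVal])
abbrev Gam : Type := Option (Layer Bool 2) × ((i : Fin 1) → Option (Layer Sig1 2))

def gsym (a b : Bool) : Gam := (some (L0 a b), fun _ => some (L1 a b))

lemma gsym_inj {a b a' b' : Bool} (h : gsym a b = gsym a' b') : a = a' ∧ b = b' := by
  have h1 : some (L0 a b) = some (L0 a' b') := congrArg Prod.fst h
  have h2 : L0 a b = L0 a' b' := Option.some.inj h1
  exact ⟨congrArg Layer.ini h2, congrArg Layer.fin h2⟩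

def wordK (k : ℕ) : List Gam :=
  List.ofFn fun j : Fin k => gsym (decide (j.val = 0)) (decide (j.val = k - 1))

lemma wordK_one : wordK 1 = [gsym true true] := by
  simp [wordK, List.ofFn_succ]

lemma wordK_succ (n : ℕ) :
    wordK (n + 2) = gsym true false ::
      (List.replicate n (gsym false false) ++ [gsym false true]) := by
  apply List.ext_getElem
  · simp [wordK]
  · intro j h1 h2
    simp only [wordK, List.getElem_ofFn]
    rcases j with _ | j
    · simp
    · rw [List.getElem_cons_succ]
      simp only [wordK, List.length_ofFn] at h1
      by_cases hj : j < n
      · rw [List.getElem_append_left (by simpa using hj), List.getElem_replicate]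
        have h0 : j + 1 ≠ 0 := by omega
        have hn : j + 1 ≠ n + 2 - 1 := by omega
        simp [h0, show j ≠ n by omega]
      · have hj' : j = n := by omega
        rw [List.getElem_append_right (by simp [hj'])]
        simp [hj', Nat.succ_sub_one]
def Rset : Set (StructTuple Bool 2 1 (fun _ => 2)) :=
  {q | ∃ k : ℕ, 0 < k ∧ q = (D0 k, fun _ => D1 k)}

lemma convTuple_eq (k : ℕ) :
    convTuple ((D0 k, fun _ => D1 k) : StructTuple Bool 2 1 (fun _ => 2)) = wordK k := by
  have hsup : (Finset.univ.sup fun i : Fin 1 =>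
      (((D0 k, fun _ => D1 k) : StructTuple Bool 2 1 (fun _ => 2)).2 i).length) = k := by
    have : (fun i : Fin 1 =>
        (((D0 k, fun _ => D1 k) : StructTuple Bool 2 1 (fun _ => 2)).2 i).length)
        = fun _ => k := by
      funext i
      simp
    rw [this]
    exact Finset.sup_const Finset.univ_nonempty k
  have hmax : max ((D0 k) : List (Layer Bool 2)).length
      (Finset.univ.sup fun i : Fin 1 =>
      (((D0 k, fun _ => D1 k) : StructTuple Bool 2 1 (fun _ => 2)).2 i).length) = k := by
    rw [hsup]; simp
  apply List.ext_getElem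
  · simp only [convTuple, List.length_ofFn, wordK]
    rw [hmax]
  · intro j h1 h2
    simp only [convTuple, List.getElem_ofFn, wordK]
    have hj : j < k := by
      simp only [convTuple, List.length_ofFn] at h1
      rw [hmax] at h1
      exact h1
    refine Prod.ext ?_ ?_
    · show (D0 k)[j]? = _
      rw [List.getElem?_eq_getElem (by simp [hj]), D0_get]
      rfl
    · funext i
      show (D1 k)[j]? = _
      rw [List.getElem?_eq_getElem (by simp [hj]), D1_get]
      rfl
open Classical in
noncomputable def cubeDFA : DFA Gam (Fin 4) where
  step q a :=
    if q = 0 then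
      (if a = gsym true true then 2 else if a = gsym true false then 1 else 3)
    else if q = 1 then
      (if a = gsym false false then 1 else if a = gsym false true then 2 else 3)
    else 3
  start := 0
  accept := {2}

section
open Classical

lemma step3 (a : Gam) : cubeDFA.step 3 a = 3 := by
  simp only [cubeDFA]
  rw [if_neg (by decide), if_neg (by decide)]

lemma step2 (a : Gam) : cubeDFA.step 2 a = 3 := by
  simp only [cubeDFA]
  rw [if_neg (by decide), if_neg (by decide)]

lemma evalFrom_cons (q : Fin 4) (a : Gam) (x : List Gam) :
    cubeDFA.evalFrom q (a :: x) = cubeDFA.evalFrom (cubeDFA.step q a) x := rfl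

lemma eval3 (x : List Gam) : cubeDFA.evalFrom 3 x = 3 := by
  induction x with
  | nil => rfl
  | cons a x ih => rw [evalFrom_cons, step3]; exact ih

lemma eval2 (x : List Gam) : cubeDFA.evalFrom 2 x = 2 ↔ x = [] := by
  cases x with
  | nil => simp [DFA.evalFrom]
  | cons a x =>
    rw [evalFrom_cons, step2, eval3]
    simp

lemma eval1 (x : List Gam) : cubeDFA.evalFrom 1 x = 2 ↔
    ∃ n : ℕ, x = List.replicate n (gsym false false) ++ [gsym false true] := by
  induction x with
  | nil =>
    constructor
    · intro h; exact absurd h (by decide)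
    · rintro ⟨n, hn⟩
      exact absurd (congrArg List.length hn) (by simp)
  | cons a x ih =>
    rw [evalFrom_cons]
    have hstep : cubeDFA.step 1 a =
        (if a = gsym false false then 1 else if a = gsym false true then 2 else 3) := by
      simp only [cubeDFA]
      simp
    by_cases ha : a = gsym false false
    · subst ha
      rw [hstep, if_pos rfl, ih]
      constructor
      · rintro ⟨n, rfl⟩
        exact ⟨n + 1, by simp [List.replicate_succ]⟩
      · rintro ⟨n, hn⟩
        cases n with
        | zero =>
          simp at hn
          obtain ⟨h1, -⟩ := hn
          exact absurd (gsym_inj h1).2 (by decide)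
        | succ m =>
          rw [List.replicate_succ] at hn
          simp only [List.cons_append, List.cons.injEq] at hn
          exact ⟨m, hn.2⟩
    · by_cases hb : a = gsym false true
      · subst hb
        rw [hstep, if_neg ha, if_pos rfl, eval2]
        constructor
        · rintro rfl
          exact ⟨0, by simp⟩
        · rintro ⟨n, hn⟩
          cases n with
          | zero =>
            simp only [List.replicate_zero, List.nil_append, List.cons.injEq] at hn
            exact hn.2
          | succ m =>
            rw [List.replicate_succ] at hn
            simp only [List.cons_append, List.cons.injEq] at hn
            exact absurd (gsym_inj hn.1).2 (by decide)
      · rw [hstep, if_neg ha, if_neg hb, eval3]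
        constructor
        · intro h; exact absurd h (by decide)
        · rintro ⟨n, hn⟩
          cases n with
          | zero =>
            simp only [List.replicate_zero, List.nil_append, List.cons.injEq] at hn
            exact absurd hn.1 hb
          | succ m =>
            rw [List.replicate_succ] at hn
            simp only [List.cons_append, List.cons.injEq] at hn
            exact absurd hn.1 ha

end
section
open Classical

lemma wordK_len (k : ℕ) : (wordK k).length = k := by simp [wordK]

lemma cube_accepts (x : List Gam) :
    x ∈ cubeDFA.accepts ↔ ∃ k : ℕ, 0 < k ∧ x = wordK k := by
  have hacc : x ∈ cubeDFA.accepts ↔ cubeDFA.evalFrom 0 x = 2 := Iff.rfl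
  rw [hacc]
  cases x with
  | nil =>
    constructor
    · intro h; exact absurd h (by decide)
    · rintro ⟨k, hk, hx⟩
      have := congrArg List.length hx
      rw [wordK_len] at this
      simp at this
      omega
  | cons a x =>
    rw [evalFrom_cons]
    have hstep : cubeDFA.step 0 a =
        (if a = gsym true true then 2 else if a = gsym true false then 1 else 3) := by
      simp only [cubeDFA]
      simp
    by_cases ha : a = gsym true true
    · subst ha
      rw [hstep, if_pos rfl, eval2]
      constructor
      · rintro rfl
        exact ⟨1, by omega, wordK_one.symm⟩
      · rintro ⟨k, hk, hx⟩
        match k, hk with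
        | 1, _ =>
          rw [wordK_one] at hx
          exact (List.cons.inj hx).2.symm ▸ rfl
        | (m + 2), _ =>
          rw [wordK_succ] at hx
          obtain ⟨h1, -⟩ := List.cons.inj hx
          exact absurd (gsym_inj h1).2 (by decide)
    · by_cases hb : a = gsym true false
      · subst hb
        rw [hstep, if_neg ha, if_pos rfl, eval1]
        constructor
        · rintro ⟨n, rfl⟩
          exact ⟨n + 2, by omega, by rw [wordK_succ]⟩
        · rintro ⟨k, hk, hx⟩
          match k, hk with
          | 1, _ =>
            rw [wordK_one] at hx
            exact absurd (gsym_inj (List.cons.inj hx).1).2 (by decide)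
          | (m + 2), _ =>
            rw [wordK_succ] at hx
            exact ⟨m, (List.cons.inj hx).2⟩
      · rw [hstep, if_neg ha, if_neg hb, eval3]
        constructor
        · intro h; exact absurd h (by decide)
        · rintro ⟨k, hk, hx⟩
          match k, hk with
          | 1, _ =>
            rw [wordK_one] at hx
            exact absurd (List.cons.inj hx).1 ha
          | (m + 2), _ =>
            rw [wordK_succ] at hx
            exact absurd (List.cons.inj hx).1 hb

lemma regular_Rset : RegularTuple Rset := by
  refine ⟨Fin 4, inferInstance, cubeDFA, ?_⟩
  ext x
  rw [cube_accepts]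
  constructor
  · rintro ⟨k, hk, rfl⟩
    exact ⟨(D0 k, fun _ => D1 k), ⟨k, hk, rfl⟩, convTuple_eq k⟩
  · rintro ⟨q, ⟨k, hk, rfl⟩, rfl⟩
    exact ⟨k, hk, convTuple_eq k⟩

end
/-- The class of hypercube graphs is `({0,1},2)`-regular-decisional: there is a
regular sub-relation `R` of the `({0,1},2,τ)`-structural tuples such that a
`τ`-structure is isomorphic to the structure derived from some tuple in `R`
iff it is isomorphic to some hypercube `H_k`, `k ∈ ℕ⁺`. -/
theorem stmt2 :
    ∃ R : Set (StructTuple Bool 2 1 (fun _ => 2)),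
      (∀ q ∈ R, IsStructural q.1 q.2) ∧
      RegularTuple R ∧
      ∀ (M : Type) (SM : (vocLang 1 (fun _ => 2)).Structure M),
        (∃ q ∈ R, Nonempty (@FirstOrder.Language.Equiv (vocLang 1 (fun _ => 2))
            { s : List Bool // s ∈ OddLang q.1 } M (derivedStr q.1 q.2) SM)) ↔
        (∃ k : ℕ, 0 < k ∧ Nonempty (@FirstOrder.Language.Equiv (vocLang 1 (fun _ => 2))
            (Fin k → Bool) M (hypercubeStr k) SM)) := by
  refine ⟨Rset, ?_, regular_Rset, ?_⟩
  · rintro q ⟨k, hk, rfl⟩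
    exact structural_k k hk
  · intro M SM
    constructor
    · rintro ⟨q, ⟨k, hk, rfl⟩, ⟨e⟩⟩
      exact ⟨k, hk, ⟨@FirstOrder.Language.Equiv.comp (vocLang 1 (fun _ => 2))
        (Fin k → Bool) { s : List Bool // s ∈ OddLang (D0 k) } (hypercubeStr k)
        (derivedStr (D0 k) (fun _ => D1 k)) M SM e (cubeEquiv k hk)⟩⟩
    · rintro ⟨k, hk, ⟨e⟩⟩
      exact ⟨(D0 k, fun _ => D1 k), ⟨k, hk, rfl⟩,
        ⟨@FirstOrder.Language.Equiv.comp (vocLang 1 (fun _ => 2))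
          { s : List Bool // s ∈ OddLang (D0 k) } (Fin k → Bool)
          (derivedStr (D0 k) (fun _ => D1 k)) (hypercubeStr k) M SM e
          (@FirstOrder.Language.Equiv.symm (vocLang 1 (fun _ => 2))
            (Fin k → Bool) { s : List Bool // s ∈ OddLang (D0 k) } (hypercubeStr k)
            (derivedStr (D0 k) (fun _ => D1 k)) (cubeEquiv k hk))⟩⟩
end

section
/- For every alphabet Σ and every w ∈ ℕ⁺, the binary relation R_∈(Σ,w) = {(D, s) : D ∈ B⊕(Σ,w), s ∈ L(D)}, whose first coordinate ranges over strings over the layer alphabet B(Σ,w) and whose second coordinate ranges over strings over Σ, is regular. -/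
open FirstOrder

section OddNFAAux

variable {σ : Type} {w : ℕ}

lemma getElem?_ofFn_of_lt {α : Type*} {n : ℕ} (f : Fin n → α) {i : ℕ} (h : i < n) :
    (List.ofFn f)[i]? = some (f ⟨i, h⟩) := by
  simp [List.getElem?_ofFn, List.ofFnNthVal, h]

/-- States of the auxiliary NFA: `none` is the fresh start state; otherwise we record
the current run state, the right frontier of the last layer read, whether padding has
started on the string coordinate, the `fin` flag of the last layer, and its final set. -/
abbrev NSt (w : ℕ) : Type := Option (Fin w × Set (Fin w) × Bool × Bool × Set (Fin w))

def oddStep (σ : Type) (w : ℕ) :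
    NSt w → Option (Layer σ w) × Option σ → Set (NSt w)
  | none, a => {st' | ∃ (L : Layer σ w) (q₀ q' : Fin w), a.1 = some L ∧ L.ini = true ∧
      a.2.isSome = true ∧ q₀ ∈ L.initial ∧ (q₀, a.2, q') ∈ L.trans ∧
      st' = some (q', L.right, a.2.isNone, L.fin, L.final)}
  | some (q, R, pad, fn, _), a => {st' | ∃ (L : Layer σ w) (q' : Fin w),
      a.1 = some L ∧ L.ini = false ∧ L.left = R ∧ fn = false ∧
      (pad = true → a.2 = none) ∧ (q, a.2, q') ∈ L.trans ∧
      st' = some (q', L.right, a.2.isNone, L.fin, L.final)}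

def oddNFA (σ : Type) (w : ℕ) : NFA (Option (Layer σ w) × Option σ) (NSt w) where
  step := oddStep σ w
  start := {none}
  accept := {st | ∃ q R pad F, st = some (q, R, pad, true, F) ∧ q ∈ F}

lemma mem_oddStep_none {a : Option (Layer σ w) × Option σ} {st' : NSt w} :
    st' ∈ oddStep σ w none a ↔ ∃ (L : Layer σ w) (q₀ q' : Fin w), a.1 = some L ∧
      L.ini = true ∧ a.2.isSome = true ∧ q₀ ∈ L.initial ∧ (q₀, a.2, q') ∈ L.trans ∧
      st' = some (q', L.right, a.2.isNone, L.fin, L.final) := Iff.rfl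

lemma mem_oddStep_some {a : Option (Layer σ w) × Option σ} {st' : NSt w}
    {q : Fin w} {R : Set (Fin w)} {pad fn : Bool} {F : Set (Fin w)} :
    st' ∈ oddStep σ w (some (q, R, pad, fn, F)) a ↔ ∃ (L : Layer σ w) (q' : Fin w),
      a.1 = some L ∧ L.ini = false ∧ L.left = R ∧ fn = false ∧
      (pad = true → a.2 = none) ∧ (q, a.2, q') ∈ L.trans ∧
      st' = some (q', L.right, a.2.isNone, L.fin, L.final) := Iff.rfl

lemma oddNFA_eval_none {x : List (Option (Layer σ w) × Option σ)} :
    none ∈ (oddNFA σ w).eval x ↔ x = [] := by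
  induction x using List.reverseRecOn with
  | nil => exact iff_of_true rfl rfl
  | append_singleton y a ih =>
    simp only [NFA.eval_append_singleton, NFA.mem_stepSet]
    constructor
    · rintro ⟨t, _, hstep⟩
      exfalso
      rw [show (oddNFA σ w).step = oddStep σ w from rfl] at hstep
      rcases t with _ | ⟨q, R, pad, fn, F⟩
      · obtain ⟨L, q₀, q', _, _, _, _, _, h⟩ := mem_oddStep_none.mp hstep
        simp at h
      · obtain ⟨L, q', _, _, _, _, _, _, h⟩ := (mem_oddStep_some (F := F)).mp hstep
        simp at h
    · intro h
      exact absurd h (by simp)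

/-- Invariant satisfied by any reachable non-start state of `oddNFA`. -/
def OddInv (x : List (Option (Layer σ w) × Option σ)) (q : Fin w) (R : Set (Fin w))
    (pad fn : Bool) (F : Set (Fin w)) : Prop :=
  ∃ (D : List (Layer σ w)) (s : List σ) (st : ℕ → Fin w) (hpos : 0 < D.length),
    D.length = x.length ∧ s ≠ [] ∧ s.length ≤ D.length ∧
    (∀ j, (h : j < D.length) → x[j]? = some (some (D[j]'h), s[j]?)) ∧
    (∀ i, (h : i + 1 < D.length) → (D[i + 1]'h).left = (D[i]'(by omega)).right) ∧
    (∀ i, (h : i < D.length) → ((D[i]'h).ini = true ↔ i = 0)) ∧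
    (∀ i, (h : i < D.length) → i ≠ D.length - 1 → (D[i]'h).fin = false) ∧
    (∀ i, (h : i < D.length) → (st i, s[i]?, st (i + 1)) ∈ (D[i]'h).trans) ∧
    st 0 ∈ (D[0]'hpos).initial ∧
    st D.length = q ∧
    fn = (D[D.length - 1]'(by omega)).fin ∧
    F = (D[D.length - 1]'(by omega)).final ∧
    R = (D[D.length - 1]'(by omega)).right ∧
    (pad = true ↔ s.length < D.length)

lemma oddNFA_eval_some {x : List (Option (Layer σ w) × Option σ)}
    {q : Fin w} {R : Set (Fin w)} {pad fn : Bool} {F : Set (Fin w)}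
    (hx : some (q, R, pad, fn, F) ∈ (oddNFA σ w).eval x) :
    OddInv x q R pad fn F := by
  induction x using List.reverseRecOn generalizing q R pad fn F with
  | nil =>
    exact absurd hx (by simp [oddNFA, NFA.eval, NFA.evalFrom])
  | append_singleton y a ih =>
    rw [NFA.eval_append_singleton, NFA.mem_stepSet] at hx
    obtain ⟨t, hty, hstep⟩ := hx
    rw [show (oddNFA σ w).step = oddStep σ w from rfl] at hstep
    obtain ⟨a1, a2⟩ := a
    rcases t with _ | ⟨q1, R1, pad1, fn1, F1⟩
    · -- first symbol
      have hy : y = [] := oddNFA_eval_none.mp hty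
      subst hy
      obtain ⟨L, q₀, q', ha1, hini, hsome, hq₀, htrL, heq⟩ := mem_oddStep_none.mp hstep
      simp only [Option.some.injEq, Prod.mk.injEq] at heq
      obtain ⟨hq, hR, hpad, hfn, hF⟩ := heq
      obtain ⟨a0, ha2⟩ := Option.isSome_iff_exists.mp hsome
      simp only at ha1 ha2
      subst ha1 ha2
      refine ⟨[L], [a0], fun j => if j = 0 then q₀ else q', by simp, by simp, by simp,
        by simp, ?_, ?_, ?_, ?_, ?_, by simp [hq₀], ?_, ?_, ?_, ?_, ?_⟩
      · intro j h
        simp only [List.length_singleton] at h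
        interval_cases j
        simp
      · intro i h; simp at h
      · intro i h
        simp only [List.length_singleton] at h
        interval_cases i
        simpa using hini
      · intro i h hne
        simp only [List.length_singleton] at h
        interval_cases i
        simp at hne
      · intro i h
        simp only [List.length_singleton] at h
        interval_cases i
        simpa using htrL
      · simpa using hq.symm
      · simpa using hfn
      · simpa using hF
      · simpa using hR
      · simp [hpad]
    · -- later symbol
      obtain ⟨D, s, st, hpos, hlen, hsne, hslen, hxj, hfr, hini, hfin, htr, hinit,
        hstk, hfn1, hF1, hR1, hpad1⟩ := ih hty
      obtain ⟨L, q', ha1, hLini, hLleft, hfn1f, hpadimp, htrL, heq⟩ :=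
        (mem_oddStep_some (F := F1)).mp hstep
      simp only [Option.some.injEq, Prod.mk.injEq] at heq
      obtain ⟨hq, hR, hpad, hfn, hF⟩ := heq
      set s' : List σ := s ++ a2.toList with hs'
      have hs'j : ∀ j < D.length, s'[j]? = s[j]? := by
        intro j hj
        rcases Nat.lt_or_ge j s.length with hj' | hj'
        · exact List.getElem?_append_left hj'
        · rw [List.getElem?_append_right hj', List.getElem?_eq_none hj']
          rcases a2 with _ | a0
          · simp
          · have hp1 : pad1 = false := by
              by_contra hp
              have := hpadimp (by simpa using hp)
              simp at this
            have hnlt : ¬ s.length < D.length := by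
              intro hlt
              rw [hpad1.mpr hlt] at hp1
              exact Bool.noConfusion hp1
            omega
      have hcase : s'[D.length]? = a2 ∧ s'.length ≤ D.length + 1 ∧ s' ≠ [] ∧
          (a2.isNone = true ↔ s'.length < D.length + 1) := by
        rcases a2 with _ | a0
        · refine ⟨?_, ?_, ?_, ?_⟩
          · simp only [hs', Option.toList_none, List.append_nil]
            exact List.getElem?_eq_none hslen
          · simp only [hs', Option.toList_none, List.append_nil]
            omega
          · simp [hs', hsne]
          · simp only [Option.isNone_none, hs', Option.toList_none, List.append_nil,
              true_iff]
            omega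
        · have hp1 : pad1 = false := by
            by_contra hp
            have := hpadimp (by simpa using hp)
            simp at this
          have hsl : s.length = D.length := by
            have : ¬ s.length < D.length := by
              intro hlt
              rw [hpad1.mpr hlt] at hp1
              exact Bool.noConfusion hp1
            omega
          refine ⟨?_, ?_, ?_, ?_⟩
          · rw [hs', List.getElem?_append_right (by omega), hsl]
            simp
          · simp [hs', hsl]
          · simp [hs']
          · simp [hs', hsl]
      set st' : ℕ → Fin w := fun j => if j = D.length + 1 then q' else st j with hst'
      have hst'k : ∀ j ≤ D.length, st' j = st j := by
        intro j hj
        simp only [hst']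
        rw [if_neg (by omega)]
      have hlast : ((D ++ [L])[(D ++ [L]).length - 1]'(by simp)) = L :=
        List.getElem_concat_length (l := D) (a := L) (by simp) (by simp)
      refine ⟨D ++ [L], s', st', by simp, by simpa using hlen, hcase.2.2.1,
        by simpa using hcase.2.1, ?_, ?_, ?_, ?_, ?_, ?_, ?_, ?_, ?_, ?_, ?_⟩
      · intro j h
        simp only [List.length_append, List.length_singleton] at h
        rcases Nat.lt_or_ge j D.length with hj | hj
        · rw [List.getElem?_append_left (by omega), hxj j hj,
            List.getElem_append_left hj, hs'j j hj]
        · have hjk : j = D.length := by omega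
          subst hjk
          rw [List.getElem?_append_right (by omega),
            show D.length - y.length = 0 by omega]
          simp only [List.getElem?_cons_zero, Option.some.injEq]
          rw [List.getElem_concat_length (l := D) (a := L) (i := D.length) rfl (by simp), hcase.1]
          exact Prod.ext ha1 rfl
      · intro i h
        simp only [List.length_append, List.length_singleton] at h
        rcases Nat.lt_or_ge (i + 1) D.length with hj | hj
        · rw [List.getElem_append_left hj, List.getElem_append_left (by omega)]
          exact hfr i hj
        · have hik : i + 1 = D.length := by omega
          have hieq : i = D.length - 1 := by omega
          subst hieq
          rw [List.getElem_concat_length (l := D) (a := L) hik (by simp [hik]),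
            List.getElem_append_left (by omega), hLleft, hR1]
      · intro i h
        simp only [List.length_append, List.length_singleton] at h
        rcases Nat.lt_or_ge i D.length with hj | hj
        · rw [List.getElem_append_left hj]
          rw [hini i hj]
        · have hik : i = D.length := by omega
          rw [List.getElem_concat_length (l := D) (a := L) (i := i) hik (by simp [hik]), hLini]
          simp
          omega
      · intro i h hne
        simp only [List.length_append, List.length_singleton] at h
        have hik : i < D.length := by
          simp only [List.length_append, List.length_singleton] at hne
          omega
        rw [List.getElem_append_left hik]
        rcases Nat.lt_or_ge i (D.length - 1) with hi1 | hi1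
        · exact hfin i hik (by omega)
        · have hieq : i = D.length - 1 := by omega
          subst hieq
          rw [← hfn1]
          exact hfn1f
      · intro i h
        simp only [List.length_append, List.length_singleton] at h
        rcases Nat.lt_or_ge i D.length with hj | hj
        · rw [List.getElem_append_left hj, hs'j i hj, hst'k i (by omega),
            hst'k (i + 1) (by omega)]
          exact htr i hj
        · have hik : i = D.length := by omega
          subst hik
          rw [List.getElem_concat_length (l := D) (a := L) (i := D.length) rfl (by simp), hcase.1,
            hst'k D.length (by omega), hstk]
          simp only [hst', if_pos rfl]
          exact htrL
      · rw [hst'k 0 (by omega), List.getElem_append_left hpos]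
        exact hinit
      · simp only [List.length_append, List.length_singleton, hst', if_pos rfl]
        exact hq.symm
      · rw [hlast]
        exact hfn
      · rw [hlast]
        exact hF
      · rw [hlast]
        exact hR
      · rw [hpad]
        simpa using hcase.2.2.2

lemma oddNFA_accepts_of_mem {D : List (Layer σ w)} {s : List σ}
    (hD : IsODD D) (hs : OddAccepts D s) : conv2 D s ∈ (oddNFA σ w).accepts := by
  obtain ⟨hDne, hfr, hflags⟩ := hD
  obtain ⟨hsne, hslen, st, htr, hif⟩ := hs
  have hk : 0 < D.length := List.length_pos_iff.mpr hDne
  set x := conv2 D s with hx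
  have hxlen : x.length = D.length := by
    rw [hx, conv2]
    simp only [List.length_ofFn]
    omega
  have hxj : ∀ j, j < D.length → x[j]? = some (D[j]?, s[j]?) := by
    intro j hj
    rw [hx, conv2, getElem?_ofFn_of_lt _ (show j < max D.length s.length by omega)]
  have hspos : 0 < s.length := List.length_pos_iff.mpr hsne
  have key : ∀ j, (hj : j + 1 ≤ D.length) →
      some (st (j + 1), (D[j]'(by omega)).right, (s[j]?).isNone,
        (D[j]'(by omega)).fin, (D[j]'(by omega)).final) ∈
        (oddNFA σ w).eval (x.take (j + 1)) := by
    intro j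
    induction j with
    | zero =>
      intro hj
      have hx0 : x.take 1 = [(D[0]?, s[0]?)] := by
        rw [List.take_succ, List.take_zero, hxj 0 hk]
        simp
      rw [hx0]
      rw [show ((oddNFA σ w).eval [(D[0]?, s[0]?)]) =
        (oddNFA σ w).stepSet {none} (D[0]?, s[0]?) from rfl]
      rw [NFA.mem_stepSet]
      refine ⟨none, rfl, ?_⟩
      rw [show (oddNFA σ w).step = oddStep σ w from rfl, mem_oddStep_none]
      refine ⟨D[0]'hk, st 0, st 1, ?_, (hflags 0 hk).1.mpr rfl, ?_, (hif hk).1, ?_, rfl⟩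
      · exact List.getElem?_eq_getElem hk
      · simp [List.getElem?_eq_getElem hspos]
      · exact htr 0 hk
    | succ i ihi =>
      intro hj
      have hxtake : x.take (i + 2) = x.take (i + 1) ++ [(D[i+1]?, s[i+1]?)] := by
        rw [List.take_succ, hxj (i + 1) (by omega)]
        simp
      rw [hxtake, NFA.eval_append_singleton, NFA.mem_stepSet]
      refine ⟨_, ihi (by omega), ?_⟩
      rw [show (oddNFA σ w).step = oddStep σ w from rfl, mem_oddStep_some]
      refine ⟨D[i+1]'(by omega), st (i + 2), ?_, ?_, ?_, ?_, ?_, ?_, rfl⟩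
      · exact List.getElem?_eq_getElem (by omega)
      · have h2 := (hflags (i + 1) (by omega)).1
        have hne : ¬ (i + 1 = 0) := by omega
        exact Bool.eq_false_iff.mpr (fun htrue => hne (h2.mp htrue))
      · exact hfr i (by omega)
      · have h2 := (hflags i (by omega)).2
        have hne : ¬ (i = D.length - 1) := by omega
        exact Bool.eq_false_iff.mpr (fun htrue => hne (h2.mp htrue))
      · intro hnone
        simp only [Option.isNone_iff_eq_none] at hnone
        have hsli : s.length ≤ i := by
          by_contra hc
          rw [List.getElem?_eq_getElem (by omega)] at hnone
          simp at hnone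
        exact List.getElem?_eq_none (by omega)
      · exact htr (i + 1) (by omega)
  obtain ⟨k', hkk⟩ : ∃ k', D.length = k' + 1 := ⟨D.length - 1, by omega⟩
  have hkey := key k' (by omega)
  have htake : x.take (k' + 1) = x := by
    rw [show k' + 1 = x.length by omega]
    exact List.take_length
  rw [htake] at hkey
  refine ⟨_, ⟨st (k' + 1), (D[k']'(by omega)).right, (s[k']?).isNone,
    (D[k']'(by omega)).final, ?_, ?_⟩, hkey⟩
  · have hfl : (D[k']'(by omega)).fin = true :=
      (hflags k' (by omega)).2.mpr (by omega)
    rw [hfl]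
  · have h2 := (hif hk).2
    simp only [hkk, Nat.add_sub_cancel] at h2
    exact h2

end OddNFAAux

/-- The binary relation `{(D,s) : D ∈ B⊕(Σ,w), s ∈ L(D)}` is regular. -/
theorem stmt10 (σ : Type) [Fintype σ] [Nonempty σ] (w : ℕ) (hw : 0 < w) :
    Regular2 { p : List (Layer σ w) × List σ |
      IsODD p.1 ∧ p.2 ∈ OddLang p.1 } := by
  unfold Regular2 LangRegular
  refine ⟨Set (NSt w), inferInstance, (oddNFA σ w).toDFA, ?_⟩
  rw [NFA.toDFA_correct]
  ext x
  constructor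
  · rintro ⟨S, hS, hSe⟩
    obtain ⟨q, R, pad, F, rfl, hqF⟩ := hS
    obtain ⟨D, s, st, hpos, hlen, hsne, hslen, hxj, hfr, hini, hfin, htr, hinit,
      hstk, hfn, hF, hR, hpad⟩ := oddNFA_eval_some hSe
    have hODD : IsODD D := by
      refine ⟨List.length_pos_iff.mp hpos, hfr, fun i h => ⟨hini i h, ?_, ?_⟩⟩
      · intro hf
        by_contra hne
        rw [hfin i h hne] at hf
        exact Bool.noConfusion hf
      · intro hi
        subst hi
        exact hfn.symm
    have hAcc : OddAccepts D s :=
      ⟨hsne, hslen, st, htr, fun h => ⟨hinit, by rw [hstk]; exact hF ▸ hqF⟩⟩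
    have hconv : conv2 D s = x := by
      apply List.ext_getElem?
      intro i
      rcases Nat.lt_or_ge i D.length with hi | hi
      · rw [conv2, getElem?_ofFn_of_lt _ (show i < max D.length s.length by omega),
          hxj i hi]
        simp [List.getElem?_eq_getElem hi]
      · have h1 : (conv2 D s).length ≤ i := by
          rw [conv2]
          simp only [List.length_ofFn]
          omega
        have h2 : x.length ≤ i := by omega
        rw [List.getElem?_eq_none h1, List.getElem?_eq_none h2]
    exact ⟨(D, s), ⟨hODD, hAcc⟩, hconv⟩
  · rintro ⟨⟨D, s⟩, ⟨hODD, hLang⟩, rfl⟩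
    exact oddNFA_accepts_of_mem hODD hLang
end
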